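/- arXiv:1711.03652 — 4 statements merged into one kernel-verified Lean document; each statement's English description precedes it below -/
import Mathlib

section
/- Let v : ℝ^ℓ → [1,∞) be continuously differentiable, let μ be a probability measure on ℝ^ℓ, and let r : ℝ^ℓ × ℝ^ℓ → [0,∞) be continuously differentiable with compact support. Define the operator P̂ by P̂g(x) = ∫ r(x,y) g(y) μ(dy). Then P̂ is separable in L_v^1: for every ε > 0 there exist N ≥ 1, functions s_1,…,s_N ∈ L_v^1, and finite signed measures ν_1,…,ν_N on ℝ^ℓ with ‖ν_i‖_v < ∞, such that for every measurable g : ℝ^ℓ → ℝ with ‖g‖_v ≤ 1, the function P̂g is continuously differentiable and ‖P̂g − Σ_{i=1}^N s_i · ν_i(g)‖_{v,1} ≤ ε. -/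
open MeasureTheory
open scoped ENNReal

noncomputable section

/-- Partial derivative `∂ᵢ f` of a function on `ℝ^ℓ`. -/
noncomputable def pd {ℓ : ℕ} (i : Fin ℓ) (f : (Fin ℓ → ℝ) → ℝ) (x : Fin ℓ → ℝ) : ℝ :=
  fderiv ℝ f x (Pi.single i 1)

/-- Membership in the weighted Sobolev space `L_w^1`. -/
def MemLw1 {ℓ : ℕ} (w f : (Fin ℓ → ℝ) → ℝ) : Prop :=
  ContDiff ℝ 1 f ∧ (∃ M : ℝ, ∀ x, |f x| ≤ M * w x) ∧
    ∀ i : Fin ℓ, ∃ M : ℝ, ∀ x, |pd i f x| ≤ M * w x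

/-- A continuous function vanishing off a compact set is uniformly continuous
(metric form). -/
lemma aux_unif {E F : Type*} [MetricSpace E] [ProperSpace E] [MetricSpace F] [Zero F]
    (f : E → F) (K : Set E) (hK : IsCompact K) (hf : Continuous f)
    (h0 : ∀ q ∉ K, f q = 0) {ε : ℝ} (hε : 0 < ε) :
    ∃ δ > 0, ∀ q q', dist q q' < δ → dist (f q) (f q') < ε := by
  have hK1 : IsCompact (Metric.cthickening 1 K) := hK.cthickening
  have huc : UniformContinuousOn f (Metric.cthickening 1 K) :=
    hK1.uniformContinuousOn_of_continuous hf.continuousOn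
  rw [Metric.uniformContinuousOn_iff] at huc
  obtain ⟨δ₀, hδ₀, h⟩ := huc ε hε
  refine ⟨min δ₀ 1, by positivity, fun q q' hd => ?_⟩
  by_cases hq : q ∈ K
  · exact h q (Metric.self_subset_cthickening K hq) q'
      (Metric.mem_cthickening_of_dist_le q' q 1 K hq
        (by rw [dist_comm]; exact (lt_min_iff.mp hd).2.le))
      (lt_of_lt_of_le hd (min_le_left _ _))
  by_cases hq' : q' ∈ K
  · exact h q (Metric.mem_cthickening_of_dist_le q q' 1 K hq' ((lt_min_iff.mp hd).2.le))
      q' (Metric.self_subset_cthickening K hq') (lt_of_lt_of_le hd (min_le_left _ _))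
  · rw [h0 q hq, h0 q' hq', dist_self]; exact hε

/-- Key quantitative approximation of an integral by a Riemann-type sum. -/
lemma integral_approx {Y : Type*} [MeasurableSpace Y] (μ : Measure Y) [IsProbabilityMeasure μ]
    {N : ℕ} (E : Fin N → Set Y) (hE : ∀ i, MeasurableSet (E i))
    (hdisj : ∀ i j, i ≠ j → Disjoint (E i) (E j))
    (c : Fin N → Y) (B : Set Y) (hEB : ∀ i, E i ⊆ B)
    (φ g : Y → ℝ) (hφm : Measurable φ) (hgm : Measurable g)
    {C Cφ ε' : ℝ} (hC : 0 ≤ C) (hε' : 0 ≤ ε')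
    (hφbd : ∀ y, |φ y| ≤ Cφ)
    (hφ0 : ∀ y, y ∉ ⋃ i, E i → φ y = 0)
    (hφc : ∀ i, ∀ y ∈ E i, |φ y - φ (c i)| ≤ ε')
    (hgB : ∀ y ∈ B, |g y| ≤ C) :
    |(∫ y, φ y * g y ∂μ) - ∑ i, φ (c i) * ∫ y in E i, g y ∂μ| ≤ ε' * C := by
  set U : Set Y := ⋃ i, E i with hU
  have hUm : MeasurableSet U := MeasurableSet.iUnion hE
  have hUB : U ⊆ B := Set.iUnion_subset hEB
  set ψ : Y → ℝ := fun y => ∑ i, (E i).indicator (fun _ => φ (c i)) y with hψ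
  have hψ_eq : ∀ i, ∀ y ∈ E i, ψ y = φ (c i) := by
    intro i y hy
    simp only [hψ]
    rw [Finset.sum_eq_single i]
    · simp [Set.indicator_of_mem hy]
    · intro j _ hj
      have : y ∉ E j := fun hyj => (hdisj j i hj).ne_of_mem hyj hy rfl
      simp [Set.indicator_of_notMem this]
    · simp
  have hψ_zero : ∀ y, y ∉ U → ψ y = 0 := by
    intro y hy
    simp only [hψ]
    apply Finset.sum_eq_zero
    intro i _
    exact Set.indicator_of_notMem (fun h => hy (Set.mem_iUnion.mpr ⟨i, h⟩)) _
  have key : ∀ y, |φ y * g y - ψ y * g y| ≤ U.indicator (fun _ => ε' * C) y := by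
    intro y
    by_cases hy : y ∈ U
    · rw [Set.indicator_of_mem hy]
      obtain ⟨i, hi⟩ := Set.mem_iUnion.mp hy
      rw [hψ_eq i y hi]
      rw [show φ y * g y - φ (c i) * g y = (φ y - φ (c i)) * g y by ring, abs_mul]
      exact mul_le_mul (hφc i y hi) (hgB y (hUB hy)) (abs_nonneg _) hε'
    · rw [Set.indicator_of_notMem hy, hφ0 y hy, hψ_zero y hy]
      simp [mul_nonneg hε' hC]
  have hint1 : Integrable (fun y => φ y * g y) μ := by
    refine Integrable.mono' ((integrable_const (Cφ * C)).indicator hUm)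
      ((hφm.mul hgm).aestronglyMeasurable) ?_
    filter_upwards with y
    by_cases hy : y ∈ U
    · rw [Set.indicator_of_mem hy, Real.norm_eq_abs, abs_mul]
      exact mul_le_mul (hφbd y) (hgB y (hUB hy)) (abs_nonneg _)
        (le_trans (abs_nonneg _) (hφbd y))
    · rw [Set.indicator_of_notMem hy, Real.norm_eq_abs, hφ0 y hy, zero_mul, abs_zero]
  have hint2 : ∀ i, Integrable (fun y => (E i).indicator (fun _ => φ (c i)) y * g y) μ := by
    intro i
    refine Integrable.mono' ((integrable_const (|φ (c i)| * C)).indicator (hE i))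
      (((measurable_const.indicator (hE i)).mul hgm).aestronglyMeasurable) ?_
    filter_upwards with y
    by_cases hy : y ∈ E i
    · rw [Set.indicator_of_mem hy, Set.indicator_of_mem hy, Real.norm_eq_abs, abs_mul]
      exact mul_le_mul_of_nonneg_left (hgB y (hEB i hy)) (abs_nonneg _)
    · simp [Set.indicator_of_notMem hy]
  have hint3 : Integrable (fun y => ψ y * g y) μ := by
    have : (fun y => ψ y * g y) = fun y => ∑ i, (E i).indicator (fun _ => φ (c i)) y * g y := by
      funext y; rw [hψ, Finset.sum_mul]
    rw [this]
    exact integrable_finset_sum _ (fun i _ => hint2 i)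
  have hsum : ∑ i, φ (c i) * ∫ y in E i, g y ∂μ = ∫ y, ψ y * g y ∂μ := by
    have : ∀ i : Fin N, φ (c i) * ∫ y in E i, g y ∂μ
        = ∫ y, (E i).indicator (fun _ => φ (c i)) y * g y ∂μ := by
      intro i
      rw [← integral_const_mul, ← integral_indicator (hE i)]
      congr 1
      funext y
      by_cases hy : y ∈ E i
      · rw [Set.indicator_of_mem hy, Set.indicator_of_mem hy]
      · simp [Set.indicator_of_notMem hy]
    rw [Finset.sum_congr rfl (fun i _ => this i), ← integral_finset_sum _ (fun i _ => hint2 i)]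
    congr 1
    funext y
    rw [hψ, Finset.sum_mul]
  rw [hsum, ← integral_sub hint1 hint3]
  calc |∫ y, (φ y * g y - ψ y * g y) ∂μ| ≤ ∫ y, U.indicator (fun _ => ε' * C) y ∂μ := by
        refine le_trans ?_ (integral_mono (hint1.sub hint3).abs
          ((integrable_const (ε' * C)).indicator hUm) key)
        rw [← Real.norm_eq_abs]
        exact (norm_integral_le_integral_norm _).trans (by simp [Real.norm_eq_abs])
    _ ≤ ε' * C := by
        rw [integral_indicator hUm, setIntegral_const]
        calc (μ U).toReal * (ε' * C) ≤ 1 * (ε' * C) := by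
              apply mul_le_mul_of_nonneg_right _ (mul_nonneg hε' hC)
              exact ENNReal.toReal_le_of_le_ofReal zero_le_one (by simpa using prob_le_one)
          _ = ε' * C := one_mul _

set_option maxHeartbeats 1000000 in
/-- Lemma 3.4 / `t:haPv1Separable`: an integral operator
`P̂ g(x) = ∫ r(x,y) g(y) μ(dy)` with a `C¹`, compactly supported, nonnegative
density `r` with respect to a probability measure `μ` is separable in `L_v^1`:
it can be approximated, in the induced `‖·‖_{v,1}`-operator norm, by
finite-rank kernels `Σᵢ sᵢ ⊗ νᵢ` with `sᵢ ∈ L_v^1` and `νᵢ` finite signed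
measures (given here by their Jordan decompositions `νᵢ = νpᵢ − νmᵢ`) of
finite `v`-norm. -/
theorem stmt8 {ℓ : ℕ} (hℓ : 1 ≤ ℓ) (v : (Fin ℓ → ℝ) → ℝ)
    (hv : ContDiff ℝ 1 v) (hv_one : ∀ x, 1 ≤ v x)
    (μ : Measure (Fin ℓ → ℝ)) [IsProbabilityMeasure μ]
    (r : (Fin ℓ → ℝ) → (Fin ℓ → ℝ) → ℝ)
    (hr_nonneg : ∀ x y, 0 ≤ r x y)
    (hr_smooth : ContDiff ℝ 1 fun q : (Fin ℓ → ℝ) × (Fin ℓ → ℝ) => r q.1 q.2)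
    (hr_supp : HasCompactSupport fun q : (Fin ℓ → ℝ) × (Fin ℓ → ℝ) => r q.1 q.2) :
    ∀ ε : ℝ, 0 < ε →
      ∃ (N : ℕ) (s : Fin N → (Fin ℓ → ℝ) → ℝ)
        (νp νm : Fin N → Measure (Fin ℓ → ℝ)),
        (∀ i, MemLw1 v (s i)) ∧
        (∀ i, IsFiniteMeasure (νp i) ∧ IsFiniteMeasure (νm i) ∧
          (∫⁻ x, ENNReal.ofReal (v x) ∂(νp i)) ≠ ⊤ ∧
          (∫⁻ x, ENNReal.ofReal (v x) ∂(νm i)) ≠ ⊤) ∧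
        ∀ g : (Fin ℓ → ℝ) → ℝ, Measurable g → (∀ x, |g x| ≤ v x) →
          ContDiff ℝ 1 (fun x => ∫ y, r x y * g y ∂μ) ∧
          ∀ x,
            |(∫ y, r x y * g y ∂μ) -
              ∑ i, s i x * ((∫ y, g y ∂(νp i)) - ∫ y, g y ∂(νm i))| ≤ ε * v x ∧
            ∀ j : Fin ℓ,
              |pd j (fun z => (∫ y, r z y * g y ∂μ) -
                ∑ i, s i z * ((∫ y, g y ∂(νp i)) - ∫ y, g y ∂(νm i))) x| ≤ ε * v x := by
  intro ε hε
  classical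
  set F : (Fin ℓ → ℝ) × (Fin ℓ → ℝ) → ℝ := fun q => r q.1 q.2 with hFdef
  have hFc : Continuous F := hr_smooth.continuous
  set G : (Fin ℓ → ℝ) × (Fin ℓ → ℝ) → ((Fin ℓ → ℝ) × (Fin ℓ → ℝ)) →L[ℝ] ℝ := fderiv ℝ F with hGdef
  have hGc : Continuous G := hr_smooth.continuous_fderiv one_ne_zero
  have hGsupp : HasCompactSupport G := hr_supp.fderiv (𝕜 := ℝ)
  -- radius of the support
  obtain ⟨R₀, hR₀⟩ := hr_supp.isCompact.isBounded.subset_closedBall 0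
  set R : ℝ := max R₀ 0 with hRdef
  have hR0 : 0 ≤ R := le_max_right _ _
  have hRsupp : tsupport F ⊆ Metric.closedBall 0 R :=
    hR₀.trans (Metric.closedBall_subset_closedBall (le_max_left _ _))
  have hF0 : ∀ x y : (Fin ℓ → ℝ), R < ‖y‖ → r x y = 0 := by
    intro x y hy
    have h1 : ((x, y) : (Fin ℓ → ℝ) × (Fin ℓ → ℝ)) ∉ tsupport F := by
      intro hmem
      have := hRsupp hmem
      rw [Metric.mem_closedBall, dist_zero_right, Prod.norm_def] at this
      exact absurd (le_trans (le_max_right _ _) this) (not_le.mpr hy)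
    exact image_eq_zero_of_notMem_tsupport (f := F) h1
  have hG0 : ∀ x y : (Fin ℓ → ℝ), R < ‖y‖ → G (x, y) = 0 := by
    intro x y hy
    have hopen : IsOpen {q : (Fin ℓ → ℝ) × (Fin ℓ → ℝ) | R < ‖q.2‖} :=
      isOpen_lt continuous_const (continuous_norm.comp continuous_snd)
    have hev : F =ᶠ[nhds (x, y)] (fun _ => (0 : ℝ)) := by
      filter_upwards [hopen.mem_nhds (by exact hy : R < ‖((x, y) : (Fin ℓ → ℝ) × (Fin ℓ → ℝ)).2‖)] with q hq
      exact hF0 q.1 q.2 hq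
    rw [hGdef]
    rw [hev.fderiv_eq, fderiv_fun_const]
    rfl
  -- bounds
  obtain ⟨Cr, hCr⟩ := hFc.bounded_above_of_compact_support hr_supp
  obtain ⟨CG, hCG⟩ := hGc.bounded_above_of_compact_support hGsupp
  have hCr0 : 0 ≤ Cr := le_trans (norm_nonneg _) (hCr (0, 0))
  have hCG0 : 0 ≤ CG := le_trans (norm_nonneg _) (hCG (0, 0))
  -- sup of v on the ball
  set B₀ : Set (Fin ℓ → ℝ) := Metric.closedBall 0 R with hB₀def
  have hB₀compact : IsCompact B₀ := isCompact_closedBall 0 R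
  have hB₀meas : MeasurableSet B₀ := measurableSet_closedBall
  have hB₀ne : B₀.Nonempty := ⟨0, Metric.mem_closedBall_self hR0⟩
  obtain ⟨z₀, hz₀B, hz₀'⟩ := hB₀compact.exists_isMaxOn hB₀ne (hv.continuous.continuousOn)
  have hz₀ : ∀ y ∈ B₀, v y ≤ v z₀ := fun y hy => hz₀' hy
  set Cv : ℝ := max (v z₀) 1 with hCvdef
  have hCv1 : 1 ≤ Cv := le_max_right _ _
  have hCv0 : 0 < Cv := lt_of_lt_of_le one_pos hCv1
  have hvB : ∀ y ∈ B₀, v y ≤ Cv := fun y hy => le_trans (hz₀ y hy) (le_max_left _ _)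
  set ε' : ℝ := ε / Cv with hε'def
  have hε'pos : 0 < ε' := div_pos hε hCv0
  -- uniform continuity
  obtain ⟨δF, hδF, hFuc⟩ := aux_unif F (tsupport F) hr_supp hFc
    (fun q hq => image_eq_zero_of_notMem_tsupport hq) hε'pos
  obtain ⟨δG, hδG, hGuc⟩ := aux_unif G (tsupport G) hGsupp hGc
    (fun q hq => image_eq_zero_of_notMem_tsupport hq) hε'pos
  set δ : ℝ := min δF δG with hδdef
  have hδpos : 0 < δ := lt_min hδF hδG
  -- finite cover of B₀ by balls of radius δ
  obtain ⟨t, ht⟩ := hB₀compact.elim_finite_subcover (fun y : (Fin ℓ → ℝ) => Metric.ball y δ)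
    (fun y => Metric.isOpen_ball) (fun y hy => Set.mem_iUnion.mpr ⟨y, Metric.mem_ball_self hδpos⟩)
  set N : ℕ := t.card with hNdef
  set c : Fin N → (Fin ℓ → ℝ) := fun i => (t.equivFin.symm i : (Fin ℓ → ℝ)) with hcdef
  set D : Fin N → Set (Fin ℓ → ℝ) := fun i => Metric.ball (c i) δ ∩ B₀ with hDdef
  set E : Fin N → Set (Fin ℓ → ℝ) := fun i => D i \ ⋃ (k : Fin N) (_ : k < i), D k with hEdef
  have hDmeas : ∀ i, MeasurableSet (D i) :=
    fun i => measurableSet_ball.inter measurableSet_closedBall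
  have hEmeas : ∀ i, MeasurableSet (E i) := fun i =>
    (hDmeas i).diff (MeasurableSet.iUnion fun k => MeasurableSet.iUnion fun _ => hDmeas k)
  have hED : ∀ i, E i ⊆ D i := fun i => Set.diff_subset
  have hEB : ∀ i, E i ⊆ B₀ := fun i => (hED i).trans Set.inter_subset_right
  have hEball : ∀ i, E i ⊆ Metric.ball (c i) δ := fun i => (hED i).trans Set.inter_subset_left
  have hdisj : ∀ i j : Fin N, i ≠ j → Disjoint (E i) (E j) := by
    intro i j hij
    rcases lt_or_gt_of_ne hij with h | h
    · rw [Set.disjoint_left]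
      intro y hyi hyj
      exact hyj.2 (Set.mem_iUnion.mpr ⟨i, Set.mem_iUnion.mpr ⟨h, hyi.1⟩⟩)
    · rw [Set.disjoint_left]
      intro y hyi hyj
      exact hyi.2 (Set.mem_iUnion.mpr ⟨j, Set.mem_iUnion.mpr ⟨h, hyj.1⟩⟩)
  have hcover : B₀ ⊆ ⋃ i, E i := by
    intro y hy
    have : ∃ i : Fin N, y ∈ D i := by
      obtain ⟨w, hwt⟩ := Set.mem_iUnion₂.mp (ht hy)
      exact ⟨t.equivFin ⟨w, hwt.1⟩, by
        simp only [hDdef, Set.mem_inter_iff]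
        refine ⟨?_, hy⟩
        have : c (t.equivFin ⟨w, hwt.1⟩) = w := by
          simp [hcdef]
        rw [this]
        exact hwt.2⟩
    set S : Finset (Fin N) := Finset.univ.filter (fun i => y ∈ D i) with hSdef
    have hSne : S.Nonempty := by
      obtain ⟨i, hi⟩ := this
      exact ⟨i, by simp [hSdef, hi]⟩
    set i₀ : Fin N := S.min' hSne with hi₀def
    have hi₀S : i₀ ∈ S := S.min'_mem hSne
    have hi₀D : y ∈ D i₀ := by
      simpa [hSdef] using hi₀S
    refine Set.mem_iUnion.mpr ⟨i₀, hi₀D, ?_⟩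
    intro hmem
    obtain ⟨k, hk⟩ := Set.mem_iUnion.mp hmem
    obtain ⟨hki₀, hyk⟩ := Set.mem_iUnion.mp hk
    have : i₀ ≤ k := S.min'_le k (by simp [hSdef, hyk])
    exact absurd hki₀ (not_lt.mpr this)
  -- vanishing off the union
  have hnotU : ∀ y : (Fin ℓ → ℝ), y ∉ ⋃ i, E i → R < ‖y‖ := by
    intro y hy
    by_contra hc'
    push_neg at hc'
    exact hy (hcover (by rwa [hB₀def, Metric.mem_closedBall, dist_zero_right]))
  -- derivative of x ↦ r x y
  set Φ : (Fin ℓ → ℝ) → (Fin ℓ → ℝ) → ((Fin ℓ → ℝ) →L[ℝ] ℝ) :=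
    fun x y => (G (x, y)).comp (ContinuousLinearMap.inl ℝ (Fin ℓ → ℝ) (Fin ℓ → ℝ)) with hΦdef
  have hderiv : ∀ x y : (Fin ℓ → ℝ), HasFDerivAt (fun z => r z y) (Φ x y) x := by
    intro x y
    have h1 : HasFDerivAt F (G (x, y)) (x, y) :=
      ((hr_smooth.differentiable one_ne_zero) (x, y)).hasFDerivAt
    have h2 := h1.comp x (hasFDerivAt_prodMk_left (𝕜 := ℝ) x y); exact h2
  have hΦnorm : ∀ x y : (Fin ℓ → ℝ), ‖Φ x y‖ ≤ ‖G (x, y)‖ := by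
    intro x y
    refine ContinuousLinearMap.opNorm_le_bound _ (norm_nonneg _) fun u => ?_
    calc ‖Φ x y u‖ = ‖G (x, y) (u, 0)‖ := rfl
      _ ≤ ‖G (x, y)‖ * ‖((u, 0) : (Fin ℓ → ℝ) × (Fin ℓ → ℝ))‖ := ContinuousLinearMap.le_opNorm _ _
      _ = ‖G (x, y)‖ * ‖u‖ := by rw [Prod.norm_def, norm_zero]; congr 1; exact max_eq_left (norm_nonneg u)
  have hsingle : ∀ j : Fin ℓ, ‖(Pi.single j 1 : (Fin ℓ → ℝ))‖ = 1 := by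
    intro j
    have : Nonempty (Fin ℓ) := ⟨⟨0, hℓ⟩⟩
    rw [Pi.norm_single, norm_one]
  -- the vector (single j 1, 0) has norm ≤ 1
  have hvec : ∀ j : Fin ℓ, ‖((Pi.single j 1 : (Fin ℓ → ℝ)), (0 : (Fin ℓ → ℝ)))‖ ≤ 1 := by
    intro j
    rw [Prod.norm_def, norm_zero, hsingle j]
    simp
  -- the objects
  refine ⟨N, fun i x => r x (c i), fun i => μ.restrict (E i), fun _ => 0, ?_, ?_, ?_⟩
  · -- MemLw1
    intro i
    refine ⟨?_, ⟨Cr, fun x => ?_⟩, fun j => ⟨CG, fun x => ?_⟩⟩ <;> beta_reduce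
    · exact hr_smooth.comp (contDiff_id.prodMk contDiff_const)
    · calc |r x (c i)| ≤ Cr := by
            have := hCr (x, c i); rwa [Real.norm_eq_abs] at this
        _ ≤ Cr * v x := le_mul_of_one_le_right hCr0 (hv_one x)
    · have hfd : fderiv ℝ (fun x => r x (c i)) x = Φ x (c i) := (hderiv x (c i)).fderiv
      rw [pd, hfd]
      calc |Φ x (c i) (Pi.single j 1)| = ‖G (x, c i) ((Pi.single j 1 : (Fin ℓ → ℝ)), (0 : (Fin ℓ → ℝ)))‖ := rfl
        _ ≤ ‖G (x, c i)‖ * ‖((Pi.single j 1 : (Fin ℓ → ℝ)), (0 : (Fin ℓ → ℝ)))‖ := ContinuousLinearMap.le_opNorm _ _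
        _ ≤ CG * 1 := mul_le_mul (hCG _) (hvec j) (norm_nonneg _) hCG0
        _ ≤ CG * v x := by rw [mul_one]; exact le_mul_of_one_le_right hCG0 (hv_one x)
  · -- measures
    intro i
    refine ⟨inferInstance, inferInstance, ?_, by simp⟩
    have h1 : (∫⁻ x, ENNReal.ofReal (v x) ∂(μ.restrict (E i)))
        ≤ ∫⁻ _, ENNReal.ofReal Cv ∂(μ.restrict (E i)) := by
      apply setLIntegral_mono measurable_const
      intro y hy
      exact ENNReal.ofReal_le_ofReal (hvB y (hEB i hy))
    refine ne_of_lt (lt_of_le_of_lt h1 ?_)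
    rw [lintegral_const]
    exact ENNReal.mul_lt_top ENNReal.ofReal_lt_top
      (lt_of_le_of_lt (measure_mono (Set.subset_univ _)) (by simp [measure_lt_top]))
  · -- the estimate for each g
    intro g hg hgv
    have hgB : ∀ y ∈ B₀, |g y| ≤ Cv := fun y hy => le_trans (hgv y) (hvB y hy)
    -- measurability of y ↦ r x y
    have hrxm : ∀ x : (Fin ℓ → ℝ), Measurable (fun y => r x y) :=
      fun x => (hFc.comp (continuous_const.prodMk continuous_id)).measurable
    -- integrability of the main integrand
    have hint : ∀ x : (Fin ℓ → ℝ), Integrable (fun y => r x y * g y) μ := by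
      intro x
      refine Integrable.mono' ((integrable_const (Cr * Cv)).indicator hB₀meas)
        (((hrxm x).mul hg).aestronglyMeasurable) ?_
      filter_upwards with y
      by_cases hy : y ∈ B₀
      · rw [Set.indicator_of_mem hy, Real.norm_eq_abs, abs_mul]
        refine mul_le_mul ?_ (hgB y hy) (abs_nonneg _) hCr0
        have := hCr (x, y); rwa [Real.norm_eq_abs] at this
      · have hy' : R < ‖y‖ := by
          rw [hB₀def, Metric.mem_closedBall, dist_zero_right] at hy; exact not_le.mp hy
        rw [Set.indicator_of_notMem hy, Real.norm_eq_abs, hF0 x y hy', zero_mul, abs_zero]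
    -- integrability of the derivative integrand
    have hΦ0 : ∀ x y : (Fin ℓ → ℝ), R < ‖y‖ → Φ x y = 0 := by
      intro x y hy
      rw [hΦdef]
      simp only [hG0 x y hy, ContinuousLinearMap.zero_comp]
    have hΦcont : ∀ y : (Fin ℓ → ℝ), Continuous (fun x => Φ x y) :=
      fun y => (hGc.comp (continuous_id.prodMk continuous_const)).clm_comp continuous_const
    have hΦconty : ∀ x : (Fin ℓ → ℝ), Continuous (fun y => Φ x y) :=
      fun x => (hGc.comp (continuous_const.prodMk continuous_id)).clm_comp continuous_const
    have hF'int : ∀ x : (Fin ℓ → ℝ), Integrable (fun y => g y • Φ x y) μ := by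
      intro x
      refine Integrable.mono' ((integrable_const (Cv * CG)).indicator hB₀meas)
        ((hg.stronglyMeasurable.smul (hΦconty x).stronglyMeasurable).aestronglyMeasurable) ?_
      filter_upwards with y
      by_cases hy : y ∈ B₀
      · rw [Set.indicator_of_mem hy]
        refine le_trans (le_of_eq (norm_smul (g y) (Φ x y))) ?_
        rw [Real.norm_eq_abs]
        exact mul_le_mul (hgB y hy) (le_trans (hΦnorm x y) (hCG _)) (norm_nonneg _)
          (le_trans (abs_nonneg _) (hgB y hy))
      · have hy' : R < ‖y‖ := by
          rw [hB₀def, Metric.mem_closedBall, dist_zero_right] at hy; exact not_le.mp hy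
        rw [Set.indicator_of_notMem hy, hΦ0 x y hy', smul_zero, norm_zero]
    -- differentiability of Pg
    have hPg_deriv : ∀ x₀ : (Fin ℓ → ℝ), HasFDerivAt (fun x => ∫ y, r x y * g y ∂μ)
        (∫ y, g y • Φ x₀ y ∂μ) x₀ := by
      intro x₀
      apply hasFDerivAt_integral_of_dominated_of_fderiv_le
        (F' := fun x y => g y • Φ x y)
        (bound := fun y => B₀.indicator (fun _ => Cv * CG) y) (s := Metric.ball x₀ 1) (Metric.ball_mem_nhds x₀ one_pos)
      · exact Filter.Eventually.of_forall fun x => ((hrxm x).mul hg).aestronglyMeasurable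
      · exact hint x₀
      · exact (hg.stronglyMeasurable.smul (hΦconty x₀).stronglyMeasurable).aestronglyMeasurable
      · filter_upwards with y
        intro x _
        by_cases hy : y ∈ B₀
        · rw [Set.indicator_of_mem hy]
          refine le_trans (le_of_eq (norm_smul (g y) (Φ x y))) ?_
          rw [Real.norm_eq_abs]
          exact mul_le_mul (hgB y hy) (le_trans (hΦnorm x y) (hCG _)) (norm_nonneg _)
            (le_trans (abs_nonneg _) (hgB y hy))
        · have hy' : R < ‖y‖ := by
            rw [hB₀def, Metric.mem_closedBall, dist_zero_right] at hy; exact not_le.mp hy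
          rw [Set.indicator_of_notMem hy, hΦ0 x y hy', smul_zero, norm_zero]
      · exact (integrable_const (Cv * CG)).indicator hB₀meas
      · filter_upwards with y
        intro x _
        exact (hderiv x y).mul_const (g y)
    have hPg_diff : Differentiable ℝ (fun x => ∫ y, r x y * g y ∂μ) :=
      fun x => (hPg_deriv x).differentiableAt
    have hPg_fderiv : ∀ x : (Fin ℓ → ℝ), fderiv ℝ (fun x => ∫ y, r x y * g y ∂μ) x
        = ∫ y, g y • Φ x y ∂μ := fun x => (hPg_deriv x).fderiv
    have hPg_cd : ContDiff ℝ 1 (fun x => ∫ y, r x y * g y ∂μ) := by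
      rw [contDiff_one_iff_fderiv]
      refine ⟨hPg_diff, ?_⟩
      have : fderiv ℝ (fun x => ∫ y, r x y * g y ∂μ)
          = fun x => ∫ y, g y • Φ x y ∂μ := funext hPg_fderiv
      rw [this]
      apply continuous_of_dominated (bound := fun y => B₀.indicator (fun _ => Cv * CG) y)
      · exact fun x =>
          (hg.stronglyMeasurable.smul (hΦconty x).stronglyMeasurable).aestronglyMeasurable
      · intro x
        filter_upwards with y
        by_cases hy : y ∈ B₀
        · rw [Set.indicator_of_mem hy]
          refine le_trans (le_of_eq (norm_smul (g y) (Φ x y))) ?_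
          rw [Real.norm_eq_abs]
          exact mul_le_mul (hgB y hy) (le_trans (hΦnorm x y) (hCG _)) (norm_nonneg _)
            (le_trans (abs_nonneg _) (hgB y hy))
        · have hy' : R < ‖y‖ := by
            rw [hB₀def, Metric.mem_closedBall, dist_zero_right] at hy; exact not_le.mp hy
          rw [Set.indicator_of_notMem hy, hΦ0 x y hy', smul_zero, norm_zero]
      · exact (integrable_const (Cv * CG)).indicator hB₀meas
      · filter_upwards with y
        exact (hΦcont y).const_smul (g y)
    refine ⟨hPg_cd, fun x => ?_⟩
    -- notation for the coefficients
    have hIi : ∀ i : Fin N, ((∫ y, g y ∂(μ.restrict (E i))) - ∫ y, g y ∂(0 : Measure (Fin ℓ → ℝ)))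
        = ∫ y in E i, g y ∂μ := by
      intro i
      rw [integral_zero_measure, sub_zero]
    constructor
    · -- zeroth order estimate
      have happrox := integral_approx μ E hEmeas hdisj c B₀ hEB
        (fun y => r x y) g (hrxm x) hg (le_of_lt hCv0) (le_of_lt hε'pos)
        (fun y => by have := hCr (x, y); rwa [Real.norm_eq_abs] at this)
        (fun y hy => hF0 x y (hnotU y hy))
        (fun i y hy => ?_) hgB
      · calc |(∫ y, r x y * g y ∂μ) - ∑ i, r x (c i) *
              ((∫ y, g y ∂(μ.restrict (E i))) - ∫ y, g y ∂(0 : Measure (Fin ℓ → ℝ)))|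
            = |(∫ y, r x y * g y ∂μ) - ∑ i, r x (c i) * ∫ y in E i, g y ∂μ| := by
              congr 2
              exact Finset.sum_congr rfl fun i _ => by rw [hIi i]
          _ ≤ ε' * Cv := happrox
          _ = ε := div_mul_cancel₀ ε (ne_of_gt hCv0)
          _ ≤ ε * v x := le_mul_of_one_le_right hε.le (hv_one x)
      · -- uniform continuity estimate for r x ·
        have hd : dist ((x, y) : (Fin ℓ → ℝ) × (Fin ℓ → ℝ)) (x, c i) < δF := by
          rw [Prod.dist_eq, dist_self]
          have : dist y (c i) < δ := Metric.mem_ball.mp (hEball i hy)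
          calc max (0 : ℝ) (dist y (c i)) = dist y (c i) := max_eq_right dist_nonneg
            _ < δ := this
            _ ≤ δF := min_le_left _ _
        have := hFuc (x, y) (x, c i) hd
        rw [Real.dist_eq] at this
        exact this.le
    · -- first order estimate
      intro j
      -- derivative of the sum part
      have hsum_deriv : HasFDerivAt (fun z => ∑ i, r z (c i) *
          ((∫ y, g y ∂(μ.restrict (E i))) - ∫ y, g y ∂(0 : Measure (Fin ℓ → ℝ))))
          (∑ i, ((∫ y, g y ∂(μ.restrict (E i))) - ∫ y, g y ∂(0 : Measure (Fin ℓ → ℝ))) • Φ x (c i)) x :=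
        HasFDerivAt.fun_sum fun i _ => (hderiv x (c i)).mul_const _
      have hdiff_deriv : HasFDerivAt (fun z => (∫ y, r z y * g y ∂μ) - ∑ i, r z (c i) *
          ((∫ y, g y ∂(μ.restrict (E i))) - ∫ y, g y ∂(0 : Measure (Fin ℓ → ℝ))))
          ((∫ y, g y • Φ x y ∂μ) - ∑ i, ((∫ y, g y ∂(μ.restrict (E i)))
            - ∫ y, g y ∂(0 : Measure (Fin ℓ → ℝ))) • Φ x (c i)) x :=
        (hPg_deriv x).sub hsum_deriv
      rw [pd, hdiff_deriv.fderiv]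
      rw [ContinuousLinearMap.sub_apply, ContinuousLinearMap.sum_apply]
      rw [ContinuousLinearMap.integral_apply (hF'int x)]
      have happly : ∀ y : (Fin ℓ → ℝ), (g y • Φ x y) (Pi.single j 1)
          = (fun y => G (x, y) ((Pi.single j 1 : (Fin ℓ → ℝ)), (0 : (Fin ℓ → ℝ)))) y * g y := by
        intro y
        rw [ContinuousLinearMap.smul_apply]
        simp only [smul_eq_mul]
        rw [mul_comm]
        rfl
      have happly2 : ∀ i : Fin N, (((∫ y, g y ∂(μ.restrict (E i)))
          - ∫ y, g y ∂(0 : Measure (Fin ℓ → ℝ))) • Φ x (c i)) (Pi.single j 1)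
          = (fun y => G (x, y) ((Pi.single j 1 : (Fin ℓ → ℝ)), (0 : (Fin ℓ → ℝ)))) (c i) * ∫ y in E i, g y ∂μ := by
        intro i
        rw [ContinuousLinearMap.smul_apply, hIi i]
        simp only [smul_eq_mul]
        rw [mul_comm]
        rfl
      rw [integral_congr_ae (Filter.Eventually.of_forall happly)]
      rw [Finset.sum_congr rfl fun i _ => happly2 i]
      -- apply the approximation lemma with φ := Dj
      have hDjm : Measurable (fun y => G (x, y) ((Pi.single j 1 : (Fin ℓ → ℝ)), (0 : (Fin ℓ → ℝ)))) :=
        ((hGc.comp (continuous_const.prodMk continuous_id)).clm_apply continuous_const).measurable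
      have happrox := integral_approx μ E hEmeas hdisj c B₀ hEB
        (fun y => G (x, y) ((Pi.single j 1 : (Fin ℓ → ℝ)), (0 : (Fin ℓ → ℝ)))) g hDjm hg
        (Cφ := CG) (le_of_lt hCv0) (le_of_lt hε'pos)
        (fun y => ?_) (fun y hy => by
          show G (x, y) ((Pi.single j 1 : (Fin ℓ → ℝ)), (0 : (Fin ℓ → ℝ))) = (0:ℝ)
          rw [hG0 x y (hnotU y hy)]; exact ContinuousLinearMap.zero_apply _)
        (fun i y hy => ?_) hgB
      · calc |(∫ y, G (x, y) ((Pi.single j 1 : (Fin ℓ → ℝ)), (0 : (Fin ℓ → ℝ))) * g y ∂μ)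
            - ∑ i, G (x, c i) ((Pi.single j 1 : (Fin ℓ → ℝ)), (0 : (Fin ℓ → ℝ))) * ∫ y in E i, g y ∂μ|
            ≤ ε' * Cv := happrox
          _ = ε := div_mul_cancel₀ ε (ne_of_gt hCv0)
          _ ≤ ε * v x := le_mul_of_one_le_right hε.le (hv_one x)
      · -- bound on Dj
        calc |G (x, y) ((Pi.single j 1 : (Fin ℓ → ℝ)), (0 : (Fin ℓ → ℝ)))|
            ≤ ‖G (x, y)‖ * ‖((Pi.single j 1 : (Fin ℓ → ℝ)), (0 : (Fin ℓ → ℝ)))‖ := by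
              rw [← Real.norm_eq_abs]; exact ContinuousLinearMap.le_opNorm _ _
          _ ≤ CG * 1 := mul_le_mul (hCG _) (hvec j) (norm_nonneg _) hCG0
          _ = CG := mul_one _
      · -- uniform continuity estimate for Dj
        have hd : dist ((x, y) : (Fin ℓ → ℝ) × (Fin ℓ → ℝ)) (x, c i) < δG := by
          rw [Prod.dist_eq, dist_self]
          have : dist y (c i) < δ := Metric.mem_ball.mp (hEball i hy)
          calc max (0 : ℝ) (dist y (c i)) = dist y (c i) := max_eq_right dist_nonneg
            _ < δ := this
            _ ≤ δG := min_le_right _ _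
        have hGd := hGuc (x, y) (x, c i) hd
        rw [dist_eq_norm] at hGd
        calc |G (x, y) ((Pi.single j 1 : (Fin ℓ → ℝ)), (0 : (Fin ℓ → ℝ)))
              - G (x, c i) ((Pi.single j 1 : (Fin ℓ → ℝ)), (0 : (Fin ℓ → ℝ)))|
            = ‖(G (x, y) - G (x, c i)) ((Pi.single j 1 : (Fin ℓ → ℝ)), (0 : (Fin ℓ → ℝ)))‖ := by
              rw [ContinuousLinearMap.sub_apply]; rfl
          _ ≤ ‖G (x, y) - G (x, c i)‖ * ‖((Pi.single j 1 : (Fin ℓ → ℝ)), (0 : (Fin ℓ → ℝ)))‖ :=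
              ContinuousLinearMap.le_opNorm _ _
          _ ≤ ε' * 1 := mul_le_mul hGd.le (hvec j) (norm_nonneg _) hε'pos.le
          _ = ε' := mul_one _

end
end

section
/- Let P be a Markov kernel on ℝ^ℓ, v : ℝ^ℓ → [1,∞) continuous, and π an invariant probability measure for P with π(v) < ∞. Assume: (v-uniform ergodicity) there are b0 < ∞ and ρ0 < 1 such that |P^t f(x) − π(f)| ≤ b0 ρ0^t ‖f‖_v v(x) for every measurable f with ‖f‖_v < ∞, every x and every t ≥ 0; (boundedness) there is t1 ≥ 1 such that for each t ≥ t1 there is M_t < ∞ with: for every f ∈ L_v^1, P^t f ∈ L_v^1 and ‖P^t f‖_{v,1} ≤ M_t ‖f‖_{v,1}; (separability) for every ε > 0 there exist N, functions s_1,…,s_N ∈ L_v^1 and finite signed measures ν_1,…,ν_N with ‖ν_i‖_v < ∞ such that ‖P^{t1} f − Σ_{i=1}^N s_i · ν_i(f)‖_{v,1} ≤ ε for all f ∈ L_v^1 with ‖f‖_{v,1} ≤ 1. Then there exist b < ∞ and ρ < 1 such that for every f ∈ L_v^1 and every t ≥ t1, the function P^t f − π(f) belongs to L_v^1 and ‖P^t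 f − π(f)‖_{v,1} ≤ b ρ^t ‖f‖_{v,1}. -/
open MeasureTheory Filter
open scoped ENNReal ProbabilityTheory

noncomputable section

/-- Weighted sup norm `‖f‖_w`. -/
noncomputable def wnorm {ℓ : ℕ} (w f : (Fin ℓ → ℝ) → ℝ) : ℝ := ⨆ x, |f x| / w x

/-- Weighted Sobolev norm `‖f‖_{w,1}`. -/
noncomputable def wnorm1 {ℓ : ℕ} (w f : (Fin ℓ → ℝ) → ℝ) : ℝ :=
  max (wnorm w f) (⨆ i : Fin ℓ, wnorm w (pd i f))

/-- `t`-fold composition of a Markov kernel. -/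
noncomputable def kerIter {X : Type*} [MeasurableSpace X]
    (P : ProbabilityTheory.Kernel X X) : ℕ → ProbabilityTheory.Kernel X X
  | 0 => ProbabilityTheory.Kernel.id
  | t + 1 => P ∘ₖ kerIter P t

/-- `P^t f (x) = ∫ f(y) P^t(x, dy)`. -/
noncomputable def kerPt {X : Type*} [MeasurableSpace X]
    (P : ProbabilityTheory.Kernel X X) (t : ℕ) (f : X → ℝ) (x : X) : ℝ :=
  ∫ y, f y ∂(kerIter P t x)

/-- `π` is an invariant probability measure for the kernel `P`. -/
def KerInvariant {X : Type*} [MeasurableSpace X]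
    (P : ProbabilityTheory.Kernel X X) (π : Measure X) : Prop :=
  ∀ A : Set X, MeasurableSet A → ∫⁻ x, P x A ∂π = π A

end

open MeasureTheory

/-! ### Auxiliary lemmas -/

section Aux

variable {ℓ : ℕ}

lemma wnorm_nonneg {v f : (Fin ℓ → ℝ) → ℝ} (hv1 : ∀ x, 1 ≤ v x) :
    0 ≤ wnorm v f :=
  Real.iSup_nonneg fun x => div_nonneg (abs_nonneg _) (zero_le_one.trans (hv1 x))

lemma wnorm1_nonneg {v f : (Fin ℓ → ℝ) → ℝ} (hv1 : ∀ x, 1 ≤ v x) :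
    0 ≤ wnorm1 v f :=
  le_trans (wnorm_nonneg hv1) (le_max_left _ _)

lemma abs_le_wnorm {v f : (Fin ℓ → ℝ) → ℝ} (hv1 : ∀ x, 1 ≤ v x)
    (hM : ∃ M : ℝ, ∀ x, |f x| ≤ M * v x) (x : Fin ℓ → ℝ) :
    |f x| ≤ wnorm v f * v x := by
  obtain ⟨M, hMx⟩ := hM
  have hvpos : ∀ y, (0:ℝ) < v y := fun y => lt_of_lt_of_le one_pos (hv1 y)
  have hbdd : BddAbove (Set.range fun y => |f y| / v y) := by
    refine ⟨M, ?_⟩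
    rintro _ ⟨y, rfl⟩
    exact (div_le_iff₀ (hvpos y)).2 (hMx y)
  have := le_ciSup hbdd x
  rw [wnorm]
  exact (div_le_iff₀ (hvpos x)).1 this

lemma abs_le_wnorm1 {v f : (Fin ℓ → ℝ) → ℝ} (hv1 : ∀ x, 1 ≤ v x)
    (hf : MemLw1 v f) (x : Fin ℓ → ℝ) :
    |f x| ≤ wnorm1 v f * v x := by
  refine (abs_le_wnorm hv1 hf.2.1 x).trans ?_
  exact mul_le_mul_of_nonneg_right (le_max_left _ _) (zero_le_one.trans (hv1 x))

lemma abs_pd_le_wnorm1 {v f : (Fin ℓ → ℝ) → ℝ} (hv1 : ∀ x, 1 ≤ v x)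
    (hf : MemLw1 v f) (i : Fin ℓ) (x : Fin ℓ → ℝ) :
    |pd i f x| ≤ wnorm1 v f * v x := by
  refine (abs_le_wnorm hv1 (hf.2.2 i) x).trans ?_
  refine mul_le_mul_of_nonneg_right ?_ (zero_le_one.trans (hv1 x))
  refine le_trans ?_ (le_max_right _ _)
  exact le_ciSup (f := fun j : Fin ℓ => wnorm v (pd j f)) (Set.finite_range _).bddAbove i

lemma pd_sub_const {f : (Fin ℓ → ℝ) → ℝ} (c : ℝ) (i : Fin ℓ) (x : Fin ℓ → ℝ) :
    pd i (fun z => f z - c) x = pd i f x := by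
  simp [pd, fderiv_sub_const]

lemma pd_const_mul {f : (Fin ℓ → ℝ) → ℝ} {x : Fin ℓ → ℝ}
    (hf : DifferentiableAt ℝ f x) (c : ℝ) (i : Fin ℓ) :
    pd i (fun z => c * f z) x = c * pd i f x := by
  simp [pd, fderiv_const_mul hf c]

lemma pd_add_sum {N : ℕ} {F : (Fin ℓ → ℝ) → ℝ} {s : Fin N → (Fin ℓ → ℝ) → ℝ}
    (D : Fin N → ℝ) {x : Fin ℓ → ℝ} (hF : DifferentiableAt ℝ F x)
    (hs : ∀ i, DifferentiableAt ℝ (s i) x) (j : Fin ℓ) :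
    pd j (fun z => F z + ∑ i, s i z * D i) x
      = pd j F x + ∑ i, pd j (s i) x * D i := by
  have h1 : HasFDerivAt (fun z => ∑ i, s i z * D i)
      (∑ i, D i • fderiv ℝ (s i) x) x :=
    HasFDerivAt.fun_sum fun i _ => ((hs i).hasFDerivAt).mul_const (D i)
  have h2 : HasFDerivAt (fun z => F z + ∑ i, s i z * D i)
      (fderiv ℝ F x + ∑ i, D i • fderiv ℝ (s i) x) x :=
    hF.hasFDerivAt.add h1
  simp only [pd, h2.fderiv]
  simp [ContinuousLinearMap.sum_apply, mul_comm]

lemma memLw1_sub_const {v f : (Fin ℓ → ℝ) → ℝ} (hv1 : ∀ x, 1 ≤ v x)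
    (hf : MemLw1 v f) (c : ℝ) : MemLw1 v (fun x => f x - c) := by
  obtain ⟨hsmooth, ⟨M, hM⟩, hpd⟩ := hf
  refine ⟨hsmooth.sub contDiff_const, ⟨M + |c|, fun x => ?_⟩, fun i => ?_⟩
  · have h1 : |f x - c| ≤ |f x| + |c| := abs_sub _ _
    have h2 : |c| ≤ |c| * v x := le_mul_of_one_le_right (abs_nonneg _) (hv1 x)
    calc |f x - c| ≤ M * v x + |c| * v x := by
          refine h1.trans (add_le_add (hM x) h2)
      _ = (M + |c|) * v x := by ring
  · obtain ⟨Mi, hMi⟩ := hpd i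
    exact ⟨Mi, fun x => by rw [pd_sub_const]; exact hMi x⟩

end Aux

section Meas

variable {X : Type*} [MeasurableSpace X]
open ProbabilityTheory

lemma integrable_of_le_v (μ : Measure X) {v : X → ℝ} (hv : Measurable v)
    (hv0 : ∀ y, (0:ℝ) ≤ v y) (hfin : ∫⁻ y, ENNReal.ofReal (v y) ∂μ ≠ ⊤)
    {g : X → ℝ} (hg : AEStronglyMeasurable g μ) (M : ℝ)
    (hb : ∀ y, |g y| ≤ M * v y) : Integrable g μ := by
  have hvint : Integrable v μ := by
    refine ⟨hv.aestronglyMeasurable, ?_⟩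
    rw [hasFiniteIntegral_iff_ofReal (ae_of_all _ hv0)]
    exact lt_top_iff_ne_top.2 hfin
  refine (hvint.const_mul M).mono' hg (ae_of_all _ fun y => ?_)
  rw [Real.norm_eq_abs]
  exact hb y

lemma abs_integral_le_v (μ : Measure X) {v : X → ℝ} (hv : Measurable v)
    (hv0 : ∀ y, (0:ℝ) ≤ v y) (hfin : ∫⁻ y, ENNReal.ofReal (v y) ∂μ ≠ ⊤)
    {g : X → ℝ} (hg : AEStronglyMeasurable g μ) (M : ℝ)
    (hb : ∀ y, |g y| ≤ M * v y) :
    |∫ y, g y ∂μ| ≤ M * ∫ y, v y ∂μ := by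
  have hvint : Integrable v μ := by
    refine ⟨hv.aestronglyMeasurable, ?_⟩
    rw [hasFiniteIntegral_iff_ofReal (ae_of_all _ hv0)]
    exact lt_top_iff_ne_top.2 hfin
  have hgint : Integrable g μ := integrable_of_le_v μ hv hv0 hfin hg M hb
  calc |∫ y, g y ∂μ| ≤ ∫ y, |g y| ∂μ := by
        simpa [Real.norm_eq_abs] using norm_integral_le_integral_norm g (μ := μ)
    _ ≤ ∫ y, M * v y ∂μ := integral_mono hgint.abs (hvint.const_mul M) hb
    _ = M * ∫ y, v y ∂μ := integral_const_mul M v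

lemma kerIter_markov (P : Kernel X X) [IsMarkovKernel P] (t : ℕ) :
    IsMarkovKernel (kerIter P t) := by
  induction t with
  | zero => exact inferInstanceAs (IsMarkovKernel Kernel.id)
  | succ t ih =>
    haveI := ih
    exact inferInstanceAs (IsMarkovKernel (P ∘ₖ kerIter P t))

lemma kerIter_add (P : Kernel X X) [IsMarkovKernel P] (a b : ℕ) :
    kerIter P (a + b) = kerIter P a ∘ₖ kerIter P b := by
  induction a with
  | zero => simp [kerIter]
  | succ a ih =>
    haveI := kerIter_markov P a
    haveI := kerIter_markov P b
    have : a + 1 + b = (a + b) + 1 := by omega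
    rw [this]
    show P ∘ₖ kerIter P (a + b) = (P ∘ₖ kerIter P a) ∘ₖ kerIter P b
    rw [ih, Kernel.comp_assoc]

lemma integral_comp_of_bound (η κ : Kernel X X) [IsMarkovKernel η] [IsMarkovKernel κ]
    (x : X) {g : X → ℝ} (hg : Measurable g) {v : X → ℝ} (hv : Measurable v)
    (hv0 : ∀ y, (0:ℝ) ≤ v y) (M : ℝ) (hb : ∀ y, |g y| ≤ M * v y)
    (hfinη : ∀ y, ∫⁻ z, ENNReal.ofReal (v z) ∂(η y) ≠ ⊤)
    (hfinc : ∫⁻ z, ENNReal.ofReal (v z) ∂((η ∘ₖ κ) x) ≠ ⊤) :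
    ∫ z, g z ∂((η ∘ₖ κ) x) = ∫ y, (∫ z, g z ∂(η y)) ∂(κ x) := by
  set μ := (η ∘ₖ κ) x with hμ
  have hM' : ∀ y, |g y| ≤ |M| * v y := fun y =>
    (hb y).trans (mul_le_mul_of_nonneg_right (le_abs_self M) (hv0 y))
  -- positive and negative part bounds
  have hgp : ∀ y, ENNReal.ofReal (g y) ≤ ENNReal.ofReal (|M| * v y) := fun y =>
    ENNReal.ofReal_le_ofReal ((le_abs_self _).trans (hM' y))
  have hgm : ∀ y, ENNReal.ofReal (-g y) ≤ ENNReal.ofReal (|M| * v y) := fun y =>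
    ENNReal.ofReal_le_ofReal ((neg_le_abs _).trans (hM' y))
  have hmeasp : Measurable fun z => ENNReal.ofReal (g z) :=
    ENNReal.measurable_ofReal.comp hg
  have hmeasm : Measurable fun z => ENNReal.ofReal (-g z) :=
    ENNReal.measurable_ofReal.comp hg.neg
  -- finiteness of lintegrals of |M| * v
  have hMv : ∀ (ν : Measure X), ∫⁻ z, ENNReal.ofReal (v z) ∂ν ≠ ⊤ →
      ∫⁻ z, ENNReal.ofReal (|M| * v z) ∂ν ≠ ⊤ := by
    intro ν hν
    have : ∀ z, ENNReal.ofReal (|M| * v z)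
        = ENNReal.ofReal |M| * ENNReal.ofReal (v z) := fun z =>
      ENNReal.ofReal_mul (abs_nonneg M)
    simp_rw [this]
    rw [lintegral_const_mul _ hv.ennreal_ofReal]
    exact ENNReal.mul_ne_top ENNReal.ofReal_ne_top hν
  set A : X → ℝ≥0∞ := fun y => ∫⁻ z, ENNReal.ofReal (g z) ∂(η y) with hA
  set B : X → ℝ≥0∞ := fun y => ∫⁻ z, ENNReal.ofReal (-g z) ∂(η y) with hB
  have hAmeas : Measurable A :=
    Measurable.lintegral_kernel_prod_right (hmeasp.comp measurable_snd)
  have hBmeas : Measurable B :=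
    Measurable.lintegral_kernel_prod_right (hmeasm.comp measurable_snd)
  have hAlt : ∀ y, A y < ⊤ := fun y =>
    lt_of_le_of_lt (lintegral_mono hgp) (lt_top_iff_ne_top.2 (hMv _ (hfinη y)))
  have hBlt : ∀ y, B y < ⊤ := fun y =>
    lt_of_le_of_lt (lintegral_mono hgm) (lt_top_iff_ne_top.2 (hMv _ (hfinη y)))
  have hAcomp : ∫⁻ y, A y ∂(κ x) = ∫⁻ z, ENNReal.ofReal (g z) ∂μ :=
    (Kernel.lintegral_comp η κ x hmeasp).symm
  have hBcomp : ∫⁻ y, B y ∂(κ x) = ∫⁻ z, ENNReal.ofReal (-g z) ∂μ :=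
    (Kernel.lintegral_comp η κ x hmeasm).symm
  have hAfin : ∫⁻ y, A y ∂(κ x) ≠ ⊤ := by
    rw [hAcomp]
    exact ne_top_of_le_ne_top (hMv μ hfinc) (lintegral_mono hgp)
  have hBfin : ∫⁻ y, B y ∂(κ x) ≠ ⊤ := by
    rw [hBcomp]
    exact ne_top_of_le_ne_top (hMv μ hfinc) (lintegral_mono hgm)
  have hgintμ : Integrable g μ :=
    integrable_of_le_v μ hv hv0 hfinc hg.aestronglyMeasurable M hb
  have hgintη : ∀ y, Integrable g (η y) := fun y =>
    integrable_of_le_v (η y) hv hv0 (hfinη y) hg.aestronglyMeasurable M hb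
  have hintA : Integrable (fun y => (A y).toReal) (κ x) :=
    integrable_toReal_of_lintegral_ne_top hAmeas.aemeasurable hAfin
  have hintB : Integrable (fun y => (B y).toReal) (κ x) :=
    integrable_toReal_of_lintegral_ne_top hBmeas.aemeasurable hBfin
  calc ∫ z, g z ∂μ
      = (∫⁻ z, ENNReal.ofReal (g z) ∂μ).toReal
        - (∫⁻ z, ENNReal.ofReal (-g z) ∂μ).toReal :=
        integral_eq_lintegral_pos_part_sub_lintegral_neg_part hgintμ
    _ = (∫⁻ y, A y ∂(κ x)).toReal - (∫⁻ y, B y ∂(κ x)).toReal := by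
        rw [hAcomp, hBcomp]
    _ = (∫ y, (A y).toReal ∂(κ x)) - ∫ y, (B y).toReal ∂(κ x) := by
        rw [integral_toReal hAmeas.aemeasurable (ae_of_all _ hAlt),
          integral_toReal hBmeas.aemeasurable (ae_of_all _ hBlt)]
    _ = ∫ y, ((A y).toReal - (B y).toReal) ∂(κ x) := (integral_sub hintA hintB).symm
    _ = ∫ y, (∫ z, g z ∂(η y)) ∂(κ x) := by
        refine integral_congr_ae (ae_of_all _ fun y => ?_)
        exact (integral_eq_lintegral_pos_part_sub_lintegral_neg_part (hgintη y)).symm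

end Meas

section Aux2

variable {ℓ : ℕ}

lemma pd_const_mul' {F f : (Fin ℓ → ℝ) → ℝ} {x : Fin ℓ → ℝ} {c : ℝ}
    (hf : DifferentiableAt ℝ f x) (hF : ∀ z, F z = c * f z) (i : Fin ℓ) :
    pd i F x = c * pd i f x := by
  have h : F = fun z => c * f z := funext hF
  rw [h]
  exact pd_const_mul hf c i

lemma pd_add_sum' {N : ℕ} {G F : (Fin ℓ → ℝ) → ℝ} {s : Fin N → (Fin ℓ → ℝ) → ℝ}
    {D : Fin N → ℝ} {x : Fin ℓ → ℝ}
    (hG : ∀ z, G z = F z + ∑ i, s i z * D i)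
    (hF : DifferentiableAt ℝ F x)
    (hs : ∀ i, DifferentiableAt ℝ (s i) x) (j : Fin ℓ) :
    pd j G x = pd j F x + ∑ i, pd j (s i) x * D i := by
  have h : G = fun z => F z + ∑ i, s i z * D i := funext hG
  rw [h]
  exact pd_add_sum D hF hs j

end Aux2

/-- Theorem 3.5 / `t:MainGeneral` (i): a `v`-uniformly
ergodic Markov kernel on `ℝ^ℓ` which maps `L_v^1` to itself boundedly for
`t ≥ t1` and whose `t1`-step kernel is separable in `L_v^1` is geometrically
ergodic in `L_v^1`. -/
theorem stmt9 {ℓ : ℕ} (hℓ : 1 ≤ ℓ)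
    (P : ProbabilityTheory.Kernel (Fin ℓ → ℝ) (Fin ℓ → ℝ))
    [ProbabilityTheory.IsMarkovKernel P]
    (v : (Fin ℓ → ℝ) → ℝ) (hv_cont : Continuous v) (hv_one : ∀ x, 1 ≤ v x)
    (π : Measure (Fin ℓ → ℝ)) [IsProbabilityMeasure π]
    (hπinv : KerInvariant P π)
    (hπv : (∫⁻ x, ENNReal.ofReal (v x) ∂π) ≠ ⊤)
    -- v-uniform ergodicity
    (b0 ρ0 : ℝ) (hρ0 : ρ0 < 1)
    (hErg : ∀ f : (Fin ℓ → ℝ) → ℝ, Measurable f →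
      (∃ M : ℝ, ∀ x, |f x| ≤ M * v x) →
      ∀ (t : ℕ) x, |kerPt P t f x - ∫ y, f y ∂π| ≤ b0 * ρ0 ^ t * wnorm v f * v x)
    -- boundedness on L_v^1 for t ≥ t1
    (t1 : ℕ) (ht1 : 1 ≤ t1)
    (hBdd : ∀ t : ℕ, t1 ≤ t → ∃ Mt : ℝ, ∀ f : (Fin ℓ → ℝ) → ℝ, MemLw1 v f →
      MemLw1 v (kerPt P t f) ∧
      ∀ x, |kerPt P t f x| ≤ Mt * wnorm1 v f * v x ∧
        ∀ i : Fin ℓ, |pd i (kerPt P t f) x| ≤ Mt * wnorm1 v f * v x)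
    -- separability of P^{t1} in L_v^1
    (hSep : ∀ ε : ℝ, 0 < ε →
      ∃ (N : ℕ) (s : Fin N → (Fin ℓ → ℝ) → ℝ)
        (νp νm : Fin N → Measure (Fin ℓ → ℝ)),
        (∀ i, MemLw1 v (s i)) ∧
        (∀ i, IsFiniteMeasure (νp i) ∧ IsFiniteMeasure (νm i) ∧
          (∫⁻ x, ENNReal.ofReal (v x) ∂(νp i)) ≠ ⊤ ∧
          (∫⁻ x, ENNReal.ofReal (v x) ∂(νm i)) ≠ ⊤) ∧
        ∀ f : (Fin ℓ → ℝ) → ℝ, MemLw1 v f → (∀ x, |f x| ≤ v x) →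
          (∀ (i : Fin ℓ) x, |pd i f x| ≤ v x) →
          ∀ x,
            |kerPt P t1 f x -
              ∑ i, s i x * ((∫ y, f y ∂(νp i)) - ∫ y, f y ∂(νm i))| ≤ ε * v x ∧
            ∀ j : Fin ℓ,
              |pd j (fun z => kerPt P t1 f z -
                ∑ i, s i z * ((∫ y, f y ∂(νp i)) - ∫ y, f y ∂(νm i))) x| ≤ ε * v x) :
    ∃ b ρ : ℝ, 0 ≤ ρ ∧ ρ < 1 ∧
      ∀ f : (Fin ℓ → ℝ) → ℝ, MemLw1 v f → ∀ t : ℕ, t1 ≤ t →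
        MemLw1 v (fun x => kerPt P t f x - ∫ y, f y ∂π) ∧
        ∀ x,
          |kerPt P t f x - ∫ y, f y ∂π| ≤ b * ρ ^ t * wnorm1 v f * v x ∧
          ∀ i : Fin ℓ,
            |pd i (fun z => kerPt P t f z - ∫ y, f y ∂π) x| ≤
              b * ρ ^ t * wnorm1 v f * v x := by
  classical
  have hvmeas : Measurable v := hv_cont.measurable
  have hv0 : ∀ x, (0:ℝ) ≤ v x := fun x => zero_le_one.trans (hv_one x)
  have hvpos : ∀ x, (0:ℝ) < v x := fun x => lt_of_lt_of_le one_pos (hv_one x)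
  have hMk : ∀ t, ProbabilityTheory.IsMarkovKernel (kerIter P t) := kerIter_markov P
  obtain ⟨b1, hb1def⟩ : ∃ b1 : ℝ, b1 = max b0 0 := ⟨_, rfl⟩
  obtain ⟨r0, hr0def⟩ : ∃ r0 : ℝ, r0 = max ρ0 0 := ⟨_, rfl⟩
  have hb10 : 0 ≤ b1 := by rw [hb1def]; exact le_max_right _ _
  have hr00 : 0 ≤ r0 := by rw [hr0def]; exact le_max_right _ _
  have hr01 : r0 < 1 := by rw [hr0def]; exact max_lt hρ0 one_pos
  -- `wnorm v v = 1`
  have hwvv : wnorm v v = 1 := by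
    have h1 : ∀ x : Fin ℓ → ℝ, |v x| / v x = 1 := fun x => by
      rw [abs_of_nonneg (hv0 x), div_self (ne_of_gt (hvpos x))]
    rw [wnorm]
    simp_rw [h1]
    exact ciSup_const
  -- `b0 * ρ0 ^ t` is nonnegative
  have hb0t : ∀ t : ℕ, 0 ≤ b0 * ρ0 ^ t := by
    intro t
    have x0 : Fin ℓ → ℝ := fun _ => 0
    have h := hErg v hvmeas ⟨1, fun x => by rw [one_mul, abs_of_nonneg (hv0 x)]⟩ t x0
    rw [hwvv] at h
    by_contra hneg
    push_neg at hneg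
    have h2 : b0 * ρ0 ^ t * 1 * v x0 < 0 := by
      have := hvpos x0
      nlinarith
    linarith [abs_nonneg (kerPt P t v x0 - ∫ y, v y ∂π)]
  have hb1r0 : ∀ t : ℕ, b0 * ρ0 ^ t ≤ b1 * r0 ^ t := by
    intro t
    rcases le_or_gt 0 ρ0 with h0 | h0
    · have hr : r0 = ρ0 := by rw [hr0def]; exact max_eq_left h0
      rw [hr, hb1def]
      exact mul_le_mul_of_nonneg_right (le_max_left _ _) (pow_nonneg h0 t)
    · have hb00 : 0 ≤ b0 := by simpa using hb0t 0
      rcases Nat.eq_zero_or_pos t with rfl | ht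
      · rw [pow_zero, pow_zero, mul_one, mul_one, hb1def]
        exact le_max_left b0 0
      · have h1 := hb0t 1
        have hb0z : b0 = 0 := by nlinarith
        rw [hb0z, zero_mul]
        exact mul_nonneg hb10 (pow_nonneg hr00 t)
  have hErg' : ∀ f : (Fin ℓ → ℝ) → ℝ, Measurable f → (∃ M, ∀ x, |f x| ≤ M * v x) →
      ∀ (t : ℕ) x, |kerPt P t f x - ∫ y, f y ∂π| ≤ b1 * r0 ^ t * wnorm v f * v x := by
    intro f hfm hM t x
    refine (hErg f hfm hM t x).trans ?_
    have hw : 0 ≤ wnorm v f := wnorm_nonneg hv_one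
    calc b0 * ρ0 ^ t * wnorm v f * v x = (b0 * ρ0 ^ t) * (wnorm v f * v x) := by ring
      _ ≤ (b1 * r0 ^ t) * (wnorm v f * v x) :=
          mul_le_mul_of_nonneg_right (hb1r0 t) (mul_nonneg hw (hv0 x))
      _ = b1 * r0 ^ t * wnorm v f * v x := by ring
  -- finiteness of `∫⁻ v` along the iterates
  have hvintπ : Integrable v π :=
    integrable_of_le_v π hvmeas hv0 hπv hvmeas.aestronglyMeasurable 1
      (fun y => by rw [one_mul, abs_of_nonneg (hv0 y)])
  have hfinIter : ∀ (t : ℕ) (x : Fin ℓ → ℝ),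
      ∫⁻ y, ENNReal.ofReal (v y) ∂(kerIter P t x) ≠ ⊤ := by
    intro t x
    haveI := hMk t
    have key : ∀ n : ℕ, ∫⁻ y, ENNReal.ofReal (min (v y) (n:ℝ)) ∂(kerIter P t x)
        ≤ ENNReal.ofReal ((∫ y, v y ∂π) + b1 * v x) := by
      intro n
      have hfnmeas : Measurable (fun y => min (v y) (n:ℝ)) := hvmeas.min measurable_const
      have hfn0 : ∀ y, 0 ≤ min (v y) (n:ℝ) := fun y => le_min (hv0 y) (Nat.cast_nonneg n)
      have hfnb : ∀ y, |min (v y) (n:ℝ)| ≤ 1 * v y := fun y => by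
        rw [one_mul, abs_of_nonneg (hfn0 y)]; exact min_le_left _ _
      have hw1 : wnorm v (fun y => min (v y) (n:ℝ)) ≤ 1 :=
        Real.iSup_le (fun y => (div_le_one (hvpos y)).2 (by simpa using hfnb y)) zero_le_one
      have herg := hErg' (fun y => min (v y) (n:ℝ)) hfnmeas ⟨1, hfnb⟩ t x
      have hwnn : 0 ≤ wnorm v (fun y => min (v y) (n:ℝ)) := wnorm_nonneg hv_one
      have hub : b1 * r0 ^ t * wnorm v (fun y => min (v y) (n:ℝ)) * v x ≤ b1 * v x := by
        have h1 : r0 ^ t ≤ 1 := pow_le_one₀ hr00 (le_of_lt hr01)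
        have h2 : (0:ℝ) ≤ r0 ^ t := pow_nonneg hr00 t
        have e1 : b1 * r0 ^ t * wnorm v (fun y => min (v y) (n:ℝ)) ≤ b1 * r0 ^ t := by
          have := mul_le_mul_of_nonneg_left hw1 (mul_nonneg hb10 h2)
          simpa [mul_one] using this
        have e2 : b1 * r0 ^ t ≤ b1 := by
          have := mul_le_mul_of_nonneg_left h1 hb10
          simpa [mul_one] using this
        exact mul_le_mul_of_nonneg_right (e1.trans e2) (hv0 x)
      have hint_fn_μ : Integrable (fun y => min (v y) (n:ℝ)) (kerIter P t x) := by
        refine (integrable_const (n:ℝ)).mono' hfnmeas.aestronglyMeasurable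
          (ae_of_all _ fun y => ?_)
        rw [Real.norm_eq_abs, abs_of_nonneg (hfn0 y)]
        exact min_le_right _ _
      have hint_fn_π : Integrable (fun y => min (v y) (n:ℝ)) π :=
        integrable_of_le_v π hvmeas hv0 hπv hfnmeas.aestronglyMeasurable 1 hfnb
      have hππ : ∫ y, min (v y) (n:ℝ) ∂π ≤ ∫ y, v y ∂π :=
        integral_mono hint_fn_π hvintπ fun y => min_le_left _ _
      have habs := (abs_le.1 herg).2
      have hle : ∫ y, min (v y) (n:ℝ) ∂(kerIter P t x) ≤ (∫ y, v y ∂π) + b1 * v x := by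
        have h3 : kerPt P t (fun y => min (v y) (n:ℝ)) x
            ≤ (∫ y, min (v y) (n:ℝ) ∂π) + b1 * v x := by linarith
        have h4 : ∫ y, min (v y) (n:ℝ) ∂(kerIter P t x)
            = kerPt P t (fun y => min (v y) (n:ℝ)) x := rfl
        linarith
      calc ∫⁻ y, ENNReal.ofReal (min (v y) (n:ℝ)) ∂(kerIter P t x)
          = ENNReal.ofReal (∫ y, min (v y) (n:ℝ) ∂(kerIter P t x)) :=
            (ofReal_integral_eq_lintegral_ofReal hint_fn_μ (ae_of_all _ hfn0)).symm
        _ ≤ ENNReal.ofReal ((∫ y, v y ∂π) + b1 * v x) := ENNReal.ofReal_le_ofReal hle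
    have hmono : Monotone (fun n : ℕ => fun y => ENNReal.ofReal (min (v y) (n:ℝ))) := by
      intro m n hmn y
      exact ENNReal.ofReal_le_ofReal (min_le_min le_rfl (Nat.cast_le.2 hmn))
    have hsup : ∀ y, (⨆ n : ℕ, ENNReal.ofReal (min (v y) (n:ℝ))) = ENNReal.ofReal (v y) := by
      intro y
      apply le_antisymm
      · exact iSup_le fun n => ENNReal.ofReal_le_ofReal (min_le_left _ _)
      · refine le_iSup_of_le ⌈v y⌉₊ ?_
        rw [min_eq_left (Nat.le_ceil _)]
    have hcalc : ∫⁻ y, ENNReal.ofReal (v y) ∂(kerIter P t x)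
        ≤ ENNReal.ofReal ((∫ y, v y ∂π) + b1 * v x) := by
      calc ∫⁻ y, ENNReal.ofReal (v y) ∂(kerIter P t x)
          = ∫⁻ y, ⨆ n : ℕ, ENNReal.ofReal (min (v y) (n:ℝ)) ∂(kerIter P t x) := by
            simp_rw [hsup]
        _ = ⨆ n : ℕ, ∫⁻ y, ENNReal.ofReal (min (v y) (n:ℝ)) ∂(kerIter P t x) :=
            lintegral_iSup (fun n => (hvmeas.min measurable_const).ennreal_ofReal) hmono
        _ ≤ ENNReal.ofReal ((∫ y, v y ∂π) + b1 * v x) := iSup_le key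
    exact ne_top_of_le_ne_top ENNReal.ofReal_ne_top hcalc
  obtain ⟨Vπ, hVπdef⟩ : ∃ Vπ : ℝ, Vπ = ∫ y, v y ∂π := ⟨_, rfl⟩
  have hVπ0 : 0 ≤ Vπ := by rw [hVπdef]; exact integral_nonneg hv0
  -- semigroup property
  have hsemi : ∀ (t : ℕ) (q : (Fin ℓ → ℝ) → ℝ), Measurable q →
      (∃ M, ∀ y, |q y| ≤ M * v y) →
      ∀ x, kerPt P (t + t1) q x = kerPt P t1 (fun y => kerPt P t q y) x := by
    intro t q hq hMq x
    obtain ⟨M, hM⟩ := hMq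
    haveI := hMk t; haveI := hMk t1; haveI := hMk (t + t1)
    have h1 : kerIter P (t + t1) = kerIter P t ∘ₖ kerIter P t1 := kerIter_add P t t1
    have h2 := integral_comp_of_bound (kerIter P t) (kerIter P t1) x hq hvmeas hv0 M hM
      (fun y => hfinIter t y) (by rw [← h1]; exact hfinIter (t + t1) x)
    calc kerPt P (t + t1) q x = ∫ z, q z ∂((kerIter P t ∘ₖ kerIter P t1) x) := by
          rw [kerPt, h1]
      _ = ∫ y, (∫ z, q z ∂(kerIter P t y)) ∂(kerIter P t1 x) := h2
      _ = kerPt P t1 (fun y => kerPt P t q y) x := rfl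
  -- separability data with `ε0 = r ^ t1 / 2`
  obtain ⟨r, hrdef⟩ : ∃ r : ℝ, r = max r0 (1/2 : ℝ) := ⟨_, rfl⟩
  have hrpos : (0:ℝ) < r := by
    rw [hrdef]; exact lt_of_lt_of_le one_half_pos (le_max_right _ _)
  have hrlt : r < 1 := by rw [hrdef]; exact max_lt hr01 (by norm_num)
  have hr0r : r0 ≤ r := by rw [hrdef]; exact le_max_left _ _
  obtain ⟨ε0, hε0def⟩ : ∃ ε0 : ℝ, ε0 = r ^ t1 / 2 := ⟨_, rfl⟩
  have hε0 : 0 < ε0 := by rw [hε0def]; positivity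
  obtain ⟨N, s, νp, νm, hsL, hν, hsep⟩ := hSep ε0 hε0
  obtain ⟨S, hSdef⟩ : ∃ S : Fin N → ℝ,
      S = fun i => |(hsL i).2.1.choose| + ∑ j, |((hsL i).2.2 j).choose| := ⟨_, rfl⟩
  have hS0 : ∀ i, 0 ≤ S i := fun i => by
    rw [hSdef]
    positivity
  have hSb : ∀ i x, |s i x| ≤ S i * v x := by
    intro i x
    refine ((hsL i).2.1.choose_spec x).trans ?_
    refine mul_le_mul_of_nonneg_right ?_ (hv0 x)
    have h1 : 0 ≤ ∑ j, |((hsL i).2.2 j).choose| :=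
      Finset.sum_nonneg fun j _ => abs_nonneg _
    have h2 := le_abs_self (hsL i).2.1.choose
    rw [hSdef]
    simp only
    linarith
  have hSd : ∀ i (j : Fin ℓ) x, |pd j (s i) x| ≤ S i * v x := by
    intro i j x
    refine (((hsL i).2.2 j).choose_spec x).trans ?_
    refine mul_le_mul_of_nonneg_right ?_ (hv0 x)
    have h1 : ((hsL i).2.2 j).choose ≤ ∑ j', |((hsL i).2.2 j').choose| :=
      (le_abs_self _).trans
        (Finset.single_le_sum (f := fun j' : Fin ℓ => |((hsL i).2.2 j').choose|)
          (fun j' _ => abs_nonneg _) (Finset.mem_univ j))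
    have h2 := abs_nonneg (hsL i).2.1.choose
    rw [hSdef]
    simp only
    linarith
  obtain ⟨Vp, hVpdef⟩ : ∃ Vp : Fin N → ℝ, Vp = fun i => ∫ y, v y ∂(νp i) := ⟨_, rfl⟩
  obtain ⟨Vm, hVmdef⟩ : ∃ Vm : Fin N → ℝ, Vm = fun i => ∫ y, v y ∂(νm i) := ⟨_, rfl⟩
  have hVp0 : ∀ i, 0 ≤ Vp i := fun i => by rw [hVpdef]; exact integral_nonneg hv0
  have hVm0 : ∀ i, 0 ≤ Vm i := fun i => by rw [hVmdef]; exact integral_nonneg hv0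
  obtain ⟨K, hKdef⟩ : ∃ K : ℝ, K = b1 * ∑ i, S i * (Vp i + Vm i) := ⟨_, rfl⟩
  have hK0 : 0 ≤ K := by
    rw [hKdef]
    exact mul_nonneg hb10 (Finset.sum_nonneg fun i _ =>
      mul_nonneg (hS0 i) (add_nonneg (hVp0 i) (hVm0 i)))
  -- constants from boundedness
  obtain ⟨Mt, hMtspec⟩ : ∃ Mt : ℕ → ℝ, ∀ (t : ℕ), t1 ≤ t →
      ∀ f : (Fin ℓ → ℝ) → ℝ, MemLw1 v f →
      MemLw1 v (kerPt P t f) ∧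
      ∀ x, |kerPt P t f x| ≤ Mt t * wnorm1 v f * v x ∧
        ∀ i : Fin ℓ, |pd i (kerPt P t f) x| ≤ Mt t * wnorm1 v f * v x := by
    refine ⟨fun t => if h : t1 ≤ t then (hBdd t h).choose else 0, ?_⟩
    intro t h f hf
    simp only [dif_pos h]
    exact (hBdd t h).choose_spec f hf
  obtain ⟨C, hCdef⟩ : ∃ C : ℝ,
      C = (∑ t ∈ Finset.range (2*t1), (|Mt t| + Vπ) * (r⁻¹)^t) + (1 + |2*K / r^t1|) :=
    ⟨_, rfl⟩
  have hsum0 : ∀ t ∈ Finset.range (2*t1), 0 ≤ (|Mt t| + Vπ) * (r⁻¹)^t := fun t _ =>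
    mul_nonneg (add_nonneg (abs_nonneg _) hVπ0) (by positivity)
  have hC1 : 1 ≤ C := by
    rw [hCdef]
    have h1 := Finset.sum_nonneg hsum0
    have h2 := abs_nonneg (2*K / r^t1)
    linarith
  have hC0 : (0:ℝ) < C := lt_of_lt_of_le one_pos hC1
  have hCK : 2*K ≤ C * r^t1 := by
    have h1 : 2*K/r^t1 ≤ C := by
      rw [hCdef]
      have h2 := le_abs_self (2*K/r^t1)
      have h3 := Finset.sum_nonneg hsum0
      linarith
    have h4 : (0:ℝ) < r^t1 := pow_pos hrpos t1
    calc 2*K = (2*K/r^t1) * r^t1 := by field_simp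
      _ ≤ C * r^t1 := mul_le_mul_of_nonneg_right h1 h4.le
  have hCB : ∀ t, t < 2*t1 → |Mt t| + Vπ ≤ C * r^t := by
    intro t ht
    have h1 : (|Mt t| + Vπ) * (r⁻¹)^t ≤ C := by
      have h2 := Finset.single_le_sum hsum0 (Finset.mem_range.2 ht)
      rw [hCdef]
      have h3 := abs_nonneg (2*K / r^t1)
      linarith
    have hrt : (0:ℝ) < r^t := pow_pos hrpos t
    calc |Mt t| + Vπ = ((|Mt t| + Vπ) * (r⁻¹)^t) * r^t := by
          rw [inv_pow, mul_assoc, inv_mul_cancel₀ hrt.ne', mul_one]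
      _ ≤ C * r^t := mul_le_mul_of_nonneg_right h1 hrt.le
  refine ⟨C, r, le_of_lt hrpos, hrlt, ?_⟩
  intro f hf
  obtain ⟨W, hWdef⟩ : ∃ W : ℝ, W = wnorm1 v f := ⟨_, rfl⟩
  have hW0 : 0 ≤ W := by rw [hWdef]; exact wnorm1_nonneg hv_one
  have hfmeas : Measurable f := hf.1.continuous.measurable
  have hfb : ∀ x, |f x| ≤ W * v x := by
    intro x; rw [hWdef]; exact abs_le_wnorm1 hv_one hf x
  obtain ⟨c0, hc0def⟩ : ∃ c0 : ℝ, c0 = ∫ y, f y ∂π := ⟨_, rfl⟩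
  have hπf : |c0| ≤ W * Vπ := by
    rw [hc0def, hVπdef]
    exact abs_integral_le_v π hvmeas hv0 hπv hfmeas.aestronglyMeasurable W hfb
  obtain ⟨g, hgdef⟩ : ∃ g : ℕ → (Fin ℓ → ℝ) → ℝ,
      g = fun t x => kerPt P t f x - c0 := ⟨_, rfl⟩
  have hgmem : ∀ t, t1 ≤ t → MemLw1 v (g t) := by
    intro t ht
    have h1 := memLw1_sub_const hv_one (hMtspec t ht f hf).1 c0
    simp only [hgdef]
    exact h1
  have herg_g : ∀ (t : ℕ) x, |g t x| ≤ b1 * r0^t * W * v x := by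
    intro t x
    have h0 : g t x = kerPt P t f x - c0 := by rw [hgdef]
    rw [h0, hc0def]
    refine (hErg' f hfmeas ⟨W, hfb⟩ t x).trans ?_
    have h1 : wnorm v f ≤ W := by rw [hWdef]; exact le_max_left _ _
    have h2 : 0 ≤ b1 * r0^t := mul_nonneg hb10 (pow_nonneg hr00 t)
    calc b1 * r0^t * wnorm v f * v x = (b1 * r0^t) * (wnorm v f) * v x := by ring
      _ ≤ (b1 * r0^t) * W * v x :=
          mul_le_mul_of_nonneg_right (mul_le_mul_of_nonneg_left h1 h2) (hv0 x)
      _ = b1 * r0^t * W * v x := by ring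
  have hgsem : ∀ t, t1 ≤ t → ∀ x, kerPt P t1 (g t) x = g (t + t1) x := by
    intro t ht x
    haveI := hMk t1
    obtain ⟨hmem, hbd⟩ := hMtspec t ht f hf
    have hkm : Measurable (kerPt P t f) := hmem.1.continuous.measurable
    obtain ⟨Mk, hMkb⟩ := hmem.2.1
    have hint : Integrable (fun y => kerPt P t f y) (kerIter P t1 x) :=
      integrable_of_le_v _ hvmeas hv0 (hfinIter t1 x) hkm.aestronglyMeasurable Mk hMkb
    have h1 : kerPt P t1 (g t) x
        = (∫ y, kerPt P t f y ∂(kerIter P t1 x)) - c0 := by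
      have e0 : kerPt P t1 (g t) x
          = (∫ y, kerPt P t f y ∂(kerIter P t1 x))
            - ∫ _y, c0 ∂(kerIter P t1 x) := by
        rw [hgdef]
        exact integral_sub hint (integrable_const c0)
      rw [e0, integral_const]
      simp
    rw [h1]
    have h2 : (∫ y, kerPt P t f y ∂(kerIter P t1 x)) = kerPt P (t + t1) f x := by
      rw [hsemi t f hfmeas ⟨W, hfb⟩ x, kerPt]
    rw [h2, hgdef]
  have hnu : ∀ t, t1 ≤ t → ∀ i,
      |(∫ y, g t y ∂(νp i)) - ∫ y, g t y ∂(νm i)| ≤ b1 * r0^t * W * (Vp i + Vm i) := by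
    intro t ht i
    obtain ⟨hp, hm, hfp, hfm⟩ := hν i
    have hgm : Measurable (g t) := (hgmem t ht).1.continuous.measurable
    have h1 := abs_integral_le_v (νp i) hvmeas hv0 hfp hgm.aestronglyMeasurable
      (b1*r0^t*W) (herg_g t)
    have h2 := abs_integral_le_v (νm i) hvmeas hv0 hfm hgm.aestronglyMeasurable
      (b1*r0^t*W) (herg_g t)
    calc |(∫ y, g t y ∂(νp i)) - ∫ y, g t y ∂(νm i)|
        ≤ |∫ y, g t y ∂(νp i)| + |∫ y, g t y ∂(νm i)| := abs_sub _ _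
      _ ≤ b1*r0^t*W * Vp i + b1*r0^t*W * Vm i := by
          rw [hVpdef, hVmdef]; exact add_le_add h1 h2
      _ = b1 * r0^t * W * (Vp i + Vm i) := by ring
  -- key contraction step
  have hkey : ∀ t, t1 ≤ t → ∀ c : ℝ, 0 < c →
      (∀ x, |g t x| ≤ c * v x) → (∀ (i : Fin ℓ) x, |pd i (g t) x| ≤ c * v x) →
      ∀ x, |g (t + t1) x| ≤ ε0 * c * v x + K * r0^t * W * v x ∧
        ∀ j : Fin ℓ, |pd j (g (t + t1)) x| ≤ ε0 * c * v x + K * r0^t * W * v x := by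
    intro t ht c hc hgb hgd x
    have hGmem : MemLw1 v (g t) := hgmem t ht
    have hGdiff : Differentiable ℝ (g t) := hGmem.1.differentiable one_ne_zero
    have hcinv : (0:ℝ) < c⁻¹ := inv_pos.2 hc
    obtain ⟨h, hhdef⟩ : ∃ h : (Fin ℓ → ℝ) → ℝ, h = fun z => c⁻¹ * g t z := ⟨_, rfl⟩
    have hhb : ∀ z, |h z| ≤ v z := by
      intro z
      rw [hhdef]
      simp only [abs_mul, abs_of_nonneg hcinv.le]
      calc c⁻¹ * |g t z| ≤ c⁻¹ * (c * v z) :=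
            mul_le_mul_of_nonneg_left (hgb z) hcinv.le
        _ = v z := by field_simp
    have hpdh : ∀ (i : Fin ℓ) z, pd i h z = c⁻¹ * pd i (g t) z := by
      intro i z
      exact pd_const_mul' (hGdiff z) (fun z' => by rw [hhdef]) i
    have hhd : ∀ (i : Fin ℓ) z, |pd i h z| ≤ v z := by
      intro i z
      rw [hpdh i z, abs_mul, abs_of_nonneg hcinv.le]
      calc c⁻¹ * |pd i (g t) z| ≤ c⁻¹ * (c * v z) :=
            mul_le_mul_of_nonneg_left (hgd i z) hcinv.le
        _ = v z := by field_simp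
    have hhmem : MemLw1 v h :=
      ⟨by rw [hhdef]; exact contDiff_const.mul hGmem.1,
        ⟨1, fun z => by rw [one_mul]; exact hhb z⟩,
        fun i => ⟨1, fun z => by rw [one_mul]; exact hhd i z⟩⟩
    obtain ⟨hval, hder⟩ := hsep h hhmem hhb hhd x
    obtain ⟨D, hDdef⟩ : ∃ D : Fin N → ℝ,
        D = fun i => (∫ y, g t y ∂(νp i)) - ∫ y, g t y ∂(νm i) := ⟨_, rfl⟩
    have hDh : ∀ i, (∫ y, h y ∂(νp i)) - (∫ y, h y ∂(νm i)) = c⁻¹ * D i := by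
      intro i
      simp only [hhdef, hDdef]
      rw [integral_const_mul, integral_const_mul]
      ring
    have hker_h : ∀ z, kerPt P t1 h z = c⁻¹ * g (t + t1) z := by
      intro z
      calc kerPt P t1 h z = ∫ y, c⁻¹ * g t y ∂(kerIter P t1 z) := by
            simp only [hhdef, kerPt]
        _ = c⁻¹ * kerPt P t1 (g t) z := by rw [integral_const_mul]; rfl
        _ = c⁻¹ * g (t + t1) z := by rw [hgsem t ht z]
    have hDb : ∀ i, |D i| ≤ b1 * r0^t * W * (Vp i + Vm i) := by
      intro i
      rw [hDdef]
      exact hnu t ht i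
    have hsumb : ∀ (x' : Fin ℓ → ℝ) (φ : Fin N → ℝ),
        (∀ i, |φ i| ≤ S i * v x') → |∑ i, φ i * D i| ≤ K * r0^t * W * v x' := by
      intro x' φ hφ
      calc |∑ i, φ i * D i| ≤ ∑ i, |φ i * D i| := Finset.abs_sum_le_sum_abs _ _
        _ = ∑ i, |φ i| * |D i| := by simp_rw [abs_mul]
        _ ≤ ∑ i, (S i * v x') * (b1 * r0^t * W * (Vp i + Vm i)) :=
            Finset.sum_le_sum fun i _ =>
              mul_le_mul (hφ i) (hDb i) (abs_nonneg _) (mul_nonneg (hS0 i) (hv0 x'))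
        _ = ∑ i, (S i * (Vp i + Vm i)) * (b1 * r0^t * W * v x') :=
            Finset.sum_congr rfl fun i _ => by ring
        _ = (∑ i, S i * (Vp i + Vm i)) * (b1 * r0^t * W * v x') := by
            rw [Finset.sum_mul]
        _ = K * r0^t * W * v x' := by rw [hKdef]; ring
    have e1 : ∀ z, (∑ i, s i z * ((∫ y, h y ∂(νp i)) - ∫ y, h y ∂(νm i)))
        = c⁻¹ * ∑ i, s i z * D i := by
      intro z
      rw [Finset.mul_sum]
      refine Finset.sum_congr rfl fun i _ => ?_
      rw [hDh i]
      ring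
    -- value bound
    have hval' : |g (t + t1) x - ∑ i, s i x * D i| ≤ ε0 * c * v x := by
      have h0 : kerPt P t1 h x
            - ∑ i, s i x * ((∫ y, h y ∂(νp i)) - ∫ y, h y ∂(νm i))
          = c⁻¹ * (g (t + t1) x - ∑ i, s i x * D i) := by
        rw [e1 x, hker_h x, mul_sub]
      rw [h0, abs_mul, abs_of_nonneg hcinv.le] at hval
      calc |g (t + t1) x - ∑ i, s i x * D i|
          = c * (c⁻¹ * |g (t + t1) x - ∑ i, s i x * D i|) := by field_simp
        _ ≤ c * (ε0 * v x) := mul_le_mul_of_nonneg_left hval hc.le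
        _ = ε0 * c * v x := by ring
    have hg'mem : MemLw1 v (g (t + t1)) := hgmem (t + t1) (le_trans ht (Nat.le_add_right t t1))
    have hg'diff : Differentiable ℝ (g (t + t1)) := hg'mem.1.differentiable one_ne_zero
    have hsdiff : ∀ i, Differentiable ℝ (s i) := fun i => (hsL i).1.differentiable one_ne_zero
    have hFdiff : ∀ z, DifferentiableAt ℝ (fun z => g (t + t1) z - ∑ i, s i z * D i) z := by
      intro z
      refine (hg'diff z).sub ?_
      exact (HasFDerivAt.fun_sum fun i _ =>
        ((hsdiff i z).hasFDerivAt).mul_const (D i)).differentiableAt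
    -- derivative bound for the difference
    have hfunid : (fun z => kerPt P t1 h z
          - ∑ i, s i z * ((∫ y, h y ∂(νp i)) - ∫ y, h y ∂(νm i)))
        = fun z => c⁻¹ * (g (t + t1) z - ∑ i, s i z * D i) := by
      funext z
      rw [e1 z, hker_h z, mul_sub]
    have hder' : ∀ j : Fin ℓ,
        |pd j (fun z => g (t + t1) z - ∑ i, s i z * D i) x| ≤ ε0 * c * v x := by
      intro j
      have h1 := hder j
      rw [hfunid] at h1
      have h2 : pd j (fun z => c⁻¹ * (g (t + t1) z - ∑ i, s i z * D i)) x
          = c⁻¹ * pd j (fun z => g (t + t1) z - ∑ i, s i z * D i) x :=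
        pd_const_mul' (hFdiff x) (fun z' => rfl) j
      rw [h2, abs_mul, abs_of_nonneg hcinv.le] at h1
      calc |pd j (fun z => g (t + t1) z - ∑ i, s i z * D i) x|
          = c * (c⁻¹ * |pd j (fun z => g (t + t1) z - ∑ i, s i z * D i) x|) := by
            field_simp
        _ ≤ c * (ε0 * v x) := mul_le_mul_of_nonneg_left h1 hc.le
        _ = ε0 * c * v x := by ring
    constructor
    · have h6 : g (t + t1) x = (g (t + t1) x - ∑ i, s i x * D i) + ∑ i, s i x * D i := by
        ring
      rw [h6]
      calc |(g (t + t1) x - ∑ i, s i x * D i) + ∑ i, s i x * D i|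
          ≤ |g (t + t1) x - ∑ i, s i x * D i| + |∑ i, s i x * D i| := abs_add_le _ _
        _ ≤ ε0 * c * v x + K * r0^t * W * v x :=
            add_le_add hval' (hsumb x (fun i => s i x) (fun i => hSb i x))
    · intro j
      have hpdid : pd j (g (t + t1)) x
          = pd j (fun z => g (t + t1) z - ∑ i, s i z * D i) x
            + ∑ i, pd j (s i) x * D i := by
        refine pd_add_sum' (fun z => ?_) (hFdiff x) (fun i => hsdiff i x) j
        show g (t + t1) z = (g (t + t1) z - ∑ i, s i z * D i) + ∑ i, s i z * D i
        ring
      rw [hpdid]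
      calc |pd j (fun z => g (t + t1) z - ∑ i, s i z * D i) x + ∑ i, pd j (s i) x * D i|
          ≤ |pd j (fun z => g (t + t1) z - ∑ i, s i z * D i) x|
            + |∑ i, pd j (s i) x * D i| := abs_add_le _ _
        _ ≤ ε0 * c * v x + K * r0^t * W * v x :=
            add_le_add (hder' j) (hsumb x (fun i => pd j (s i) x) (fun i => hSd i j x))
  -- main induction
  have main : ∀ δ : ℝ, 0 < δ → ∀ t, t1 ≤ t →
      (∀ x, |g t x| ≤ C * r^t * (W + δ) * v x) ∧
      (∀ (j : Fin ℓ) x, |pd j (g t) x| ≤ C * r^t * (W + δ) * v x) := by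
    intro δ hδ t
    induction t using Nat.strong_induction_on with
    | _ t IH =>
    intro ht
    by_cases h2 : t < 2*t1
    · -- base case
      obtain ⟨hmem, hbd⟩ := hMtspec t ht f hf
      rw [← hWdef] at hbd
      have hcoef : |Mt t| + Vπ ≤ C * r^t := hCB t h2
      have hCrt0 : (0:ℝ) ≤ C * r^t := le_of_lt (mul_pos hC0 (pow_pos hrpos t))
      have hWδ : W ≤ W + δ := by linarith
      have hker_b : ∀ x, |kerPt P t f x| ≤ |Mt t| * W * v x := by
        intro x
        refine ((hbd x).1).trans ?_
        exact mul_le_mul_of_nonneg_right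
          (mul_le_mul_of_nonneg_right (le_abs_self _) hW0) (hv0 x)
      have hc0b : ∀ x : Fin ℓ → ℝ, |c0| ≤ Vπ * W * v x := by
        intro x
        have h5 : W * Vπ ≤ W * Vπ * v x :=
          le_mul_of_one_le_right (mul_nonneg hW0 hVπ0) (hv_one x)
        calc |c0| ≤ W * Vπ := hπf
          _ ≤ W * Vπ * v x := h5
          _ = Vπ * W * v x := by ring
      constructor
      · intro x
        have h6 : |g t x| ≤ |kerPt P t f x| + |c0| := by
          rw [hgdef]
          exact abs_sub _ _
        calc |g t x| ≤ |Mt t| * W * v x + Vπ * W * v x := by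
              linarith [hker_b x, hc0b x]
          _ = (|Mt t| + Vπ) * W * v x := by ring
          _ ≤ (C * r^t) * W * v x :=
              mul_le_mul_of_nonneg_right
                (mul_le_mul_of_nonneg_right hcoef hW0) (hv0 x)
          _ ≤ C * r^t * (W + δ) * v x :=
              mul_le_mul_of_nonneg_right
                (mul_le_mul_of_nonneg_left hWδ hCrt0) (hv0 x)
      · intro j x
        have hpd : pd j (g t) x = pd j (kerPt P t f) x := by
          rw [hgdef]
          exact pd_sub_const c0 j x
        rw [hpd]
        have h7 := (hbd x).2 j
        have h8 : Mt t * W * v x ≤ |Mt t| * W * v x :=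
          mul_le_mul_of_nonneg_right
            (mul_le_mul_of_nonneg_right (le_abs_self _) hW0) (hv0 x)
        have h9 : |Mt t| * W * v x ≤ (|Mt t| + Vπ) * W * v x := by
          have h10 : (|Mt t| + Vπ) * W * v x
              = |Mt t| * W * v x + Vπ * W * v x := by ring
          have h11 : (0:ℝ) ≤ Vπ * W * v x :=
            mul_nonneg (mul_nonneg hVπ0 hW0) (hv0 x)
          linarith
        calc |pd j (kerPt P t f) x| ≤ Mt t * W * v x := h7
          _ ≤ |Mt t| * W * v x := h8
          _ ≤ (|Mt t| + Vπ) * W * v x := h9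
          _ ≤ (C * r^t) * W * v x :=
              mul_le_mul_of_nonneg_right
                (mul_le_mul_of_nonneg_right hcoef hW0) (hv0 x)
          _ ≤ C * r^t * (W + δ) * v x :=
              mul_le_mul_of_nonneg_right
                (mul_le_mul_of_nonneg_left hWδ hCrt0) (hv0 x)
    · -- inductive step
      push_neg at h2
      have ht' : t1 ≤ t - t1 := by omega
      have htlt : t - t1 < t := by omega
      have hteq : (t - t1) + t1 = t := by omega
      obtain ⟨IH1, IH2⟩ := IH (t - t1) htlt ht'
      have hcpos : 0 < C * r^(t - t1) * (W + δ) :=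
        mul_pos (mul_pos hC0 (pow_pos hrpos _)) (by linarith)
      have hk := hkey (t - t1) ht' (C * r^(t - t1) * (W + δ)) hcpos IH1
        (fun i x => IH2 i x)
      have hrteq : r ^ t = r ^ (t - t1) * r ^ t1 := by
        rw [← pow_add]
        congr 1
        omega
      have harith : ε0 * (C * r^(t - t1) * (W + δ)) + K * r0^(t - t1) * W
          ≤ C * r^t * (W + δ) := by
        have hp1 : r0^(t - t1) ≤ r^(t - t1) := pow_le_pow_left₀ hr00 hr0r _
        have hp0 : (0:ℝ) ≤ r^(t - t1) := le_of_lt (pow_pos hrpos _)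
        have hp2 : (0:ℝ) ≤ r0^(t - t1) := pow_nonneg hr00 _
        have hK2 : K ≤ C * r^t1 / 2 := by linarith
        have hWWδ : W ≤ W + δ := by linarith
        have hWδ0 : (0:ℝ) ≤ W + δ := by linarith
        have hKb : K * r0^(t - t1) * W ≤ (C * r^t1 / 2) * r^(t - t1) * (W + δ) := by
          have s1 : K * r0^(t - t1) * W ≤ K * r^(t - t1) * (W + δ) :=
            mul_le_mul (mul_le_mul_of_nonneg_left hp1 hK0) hWWδ hW0
              (mul_nonneg hK0 hp0)
          refine s1.trans ?_
          exact mul_le_mul_of_nonneg_right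
            (mul_le_mul_of_nonneg_right hK2 hp0) hWδ0
        have he : ε0 * (C * r^(t - t1) * (W + δ))
            = (C * r^t1 / 2) * r^(t - t1) * (W + δ) := by
          rw [hε0def]
          ring
        have hfin : (C * r^t1 / 2) * r^(t - t1) * (W + δ)
            + (C * r^t1 / 2) * r^(t - t1) * (W + δ)
            = C * (r^(t - t1) * r^t1) * (W + δ) := by ring
        rw [he, hrteq]
        linarith [hKb, hfin]
      constructor
      · intro x
        have h5 := (hk x).1
        rw [hteq] at h5
        calc |g t x| ≤ ε0 * (C * r^(t - t1) * (W + δ)) * v x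
              + K * r0^(t - t1) * W * v x := h5
          _ = (ε0 * (C * r^(t - t1) * (W + δ)) + K * r0^(t - t1) * W) * v x := by ring
          _ ≤ (C * r^t * (W + δ)) * v x :=
              mul_le_mul_of_nonneg_right harith (hv0 x)
      · intro j x
        have h5 := (hk x).2 j
        rw [hteq] at h5
        calc |pd j (g t) x| ≤ ε0 * (C * r^(t - t1) * (W + δ)) * v x
              + K * r0^(t - t1) * W * v x := h5
          _ = (ε0 * (C * r^(t - t1) * (W + δ)) + K * r0^(t - t1) * W) * v x := by ring
          _ ≤ (C * r^t * (W + δ)) * v x :=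
              mul_le_mul_of_nonneg_right harith (hv0 x)
  -- conclusion
  intro t ht
  constructor
  · have h1 := hgmem t ht
    rw [hgdef] at h1
    simpa only [hc0def] using h1
  intro x
  have hconv : ∀ u : ℝ, (∀ δ : ℝ, 0 < δ → u ≤ C * r^t * (W + δ) * v x) →
      u ≤ C * r^t * W * v x := by
    intro u hu
    refine le_of_forall_pos_le_add fun ε hε => ?_
    have hden : (0:ℝ) < C * r^t * v x :=
      mul_pos (mul_pos hC0 (pow_pos hrpos t)) (hvpos x)
    have hd : 0 < ε / (C * r^t * v x) := div_pos hε hden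
    have h1 := hu _ hd
    calc u ≤ C * r^t * (W + ε / (C * r^t * v x)) * v x := h1
      _ = C * r^t * W * v x + ε := by
          rw [mul_add, add_mul, mul_comm (C * r ^ t) (ε / (C * r ^ t * v x)), mul_assoc (ε / (C * r ^ t * v x)), div_mul_cancel₀ ε hden.ne']
  constructor
  · have h1 : |g t x| ≤ C * r^t * W * v x :=
      hconv _ (fun δ hδ => (main δ hδ t ht).1 x)
    rw [hgdef] at h1
    simpa only [hc0def, hWdef] using h1
  · intro i
    have h1 : |pd i (g t) x| ≤ C * r^t * W * v x :=
      hconv _ (fun δ hδ => (main δ hδ t ht).2 i x)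
    rw [hgdef] at h1
    simpa only [hc0def, hWdef] using h1
end

section
/- Let v : ℝ^ℓ → [1,∞) be continuous and let (g_n) be a sequence of continuously differentiable functions ℝ^ℓ → ℝ with sup_n ‖g_n‖_{v,1} < ∞. Suppose g : ℝ^ℓ → ℝ and ζ : ℝ^ℓ → ℝ^ℓ are continuous and that for every x ∈ ℝ^ℓ, g_n(x) → g(x) and ∇g_n(x) → ζ(x) as n → ∞. Then g is differentiable with ∇g = ζ, and g ∈ L_v^1. -/
/-!
For `C¹` functions, `gₙ (x + h) - gₙ x = ∫₀¹ Dgₙ (x + t h) h dt`. Since `v` is continuous, it is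
bounded on the segment, so the weighted bound on `∇gₙ` dominates the integrands and dominated
convergence gives `g (x + h) - g x = ∫₀¹ ⟪ζ (x + t h), h⟫ dt`. Continuity of `ζ` makes the right
side `⟪ζ x, h⟫ + o(‖h‖)`, so `∇g = ζ`; the weighted bounds survive the pointwise limits.
-/

open Filter

noncomputable section

open Topology

section LineIntegral

variable {E F : Type*} [NormedAddCommGroup E] [NormedSpace ℝ E]
  [NormedAddCommGroup F] [NormedSpace ℝ F] [CompleteSpace F]

theorem ContDiff.sub_eq_integral_fderiv {f : E → F} (hf : ContDiff ℝ 1 f) (x h : E) :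
    f (x + h) - f x = ∫ t in (0 : ℝ)..1, fderiv ℝ f (x + t • h) h := by
  have hderiv : ∀ t ∈ Set.uIcc (0 : ℝ) 1,
      HasDerivAt (fun s : ℝ => f (x + s • h)) (fderiv ℝ f (x + t • h) h) t := fun t _ =>
    (hf.differentiable one_ne_zero _).hasFDerivAt.comp_hasDerivAt t
      (((hasDerivAt_id t).smul_const h).const_add x |>.congr_deriv (one_smul ℝ h))
  have hcont : Continuous fun t : ℝ => fderiv ℝ f (x + t • h) h :=
    ((hf.continuous_fderiv one_ne_zero).comp (by fun_prop)).clm_apply continuous_const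
  simpa using (intervalIntegral.integral_eq_sub_of_hasDerivAt hderiv
    (hcont.intervalIntegrable 0 1)).symm

theorem sub_eq_integral_of_tendsto_fderiv {f : ℕ → E → F} {g : E → F} {L : E → E →L[ℝ] F}
    {B : E → ℝ} (hf : ∀ n, ContDiff ℝ 1 (f n)) (hB : Continuous B)
    (hbound : ∀ n y, ‖fderiv ℝ (f n) y‖ ≤ B y)
    (hfg : ∀ y, Tendsto (fun n => f n y) atTop (𝓝 (g y)))
    (hfL : ∀ y h, Tendsto (fun n => fderiv ℝ (f n) y h) atTop (𝓝 (L y h))) (x h : E) :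
    g (x + h) - g x = ∫ t in (0 : ℝ)..1, L (x + t • h) h := by
  obtain ⟨K, hK⟩ : ∃ K, ∀ t ∈ Set.Icc (0 : ℝ) 1, ‖B (x + t • h)‖ ≤ K :=
    isCompact_Icc.exists_bound_of_continuousOn (by fun_prop)
  have hdom : ∀ n, ∀ t ∈ Set.uIoc (0 : ℝ) 1, ‖fderiv ℝ (f n) (x + t • h) h‖ ≤ K * ‖h‖ := by
    intro n t ht
    have ht : t ∈ Set.Icc (0 : ℝ) 1 := Set.Ioc_subset_Icc_self (by simpa using ht)
    calc ‖fderiv ℝ (f n) (x + t • h) h‖ ≤ ‖fderiv ℝ (f n) (x + t • h)‖ * ‖h‖ :=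
          ContinuousLinearMap.le_opNorm _ _
      _ ≤ K * ‖h‖ := by
          gcongr
          exact (hbound n _).trans ((le_abs_self _).trans (hK t ht))
  have hlim : Tendsto (fun n => ∫ t in (0 : ℝ)..1, fderiv ℝ (f n) (x + t • h) h) atTop
      (𝓝 (∫ t in (0 : ℝ)..1, L (x + t • h) h)) :=
    intervalIntegral.tendsto_integral_filter_of_dominated_convergence (fun _ => K * ‖h‖)
      (Eventually.of_forall fun n =>
        (((hf n).continuous_fderiv one_ne_zero).comp (by fun_prop)).clm_apply
          continuous_const |>.aestronglyMeasurable)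
      (Eventually.of_forall fun n => MeasureTheory.ae_of_all _ (hdom n))
      intervalIntegrable_const
      (MeasureTheory.ae_of_all _ fun t _ => hfL _ h)
  refine tendsto_nhds_unique ?_ hlim
  simpa only [(hf _).sub_eq_integral_fderiv] using (hfg (x + h)).sub (hfg x)

theorem hasFDerivAt_of_sub_eq_integral {g : E → F} {L : E → E →L[ℝ] F} (hL : Continuous L)
    {x : E} (hg : ∀ h, g (x + h) - g x = ∫ t in (0 : ℝ)..1, L (x + t • h) h) :
    HasFDerivAt g (L x) x := by
  rw [hasFDerivAt_iff_isLittleO_nhds_zero, Asymptotics.isLittleO_iff]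
  intro c hc
  obtain ⟨δ, hδ, hLδ⟩ := Metric.continuousAt_iff.mp (hL.continuousAt (x := x)) c hc
  filter_upwards [Metric.ball_mem_nhds 0 hδ] with h hh
  have hrep : g (x + h) - g x - L x h = ∫ t in (0 : ℝ)..1, (L (x + t • h) - L x) h := by
    have hcont : Continuous fun t : ℝ => L (x + t • h) h := by fun_prop
    simp only [sub_apply]
    rw [intervalIntegral.integral_sub (hcont.intervalIntegrable 0 1) intervalIntegrable_const, hg]
    simp
  have hsmall : ∀ t ∈ Set.uIoc (0 : ℝ) 1, ‖(L (x + t • h) - L x) h‖ ≤ c * ‖h‖ := by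
    intro t ht
    rw [Set.uIoc_of_le zero_le_one] at ht
    have hdist : dist (x + t • h) x < δ := by
      rw [dist_eq_norm, add_sub_cancel_left, norm_smul, Real.norm_of_nonneg ht.1.le]
      exact (mul_le_of_le_one_left (norm_nonneg h) ht.2).trans_lt (by simpa using hh)
    exact ((L (x + t • h) - L x).le_opNorm h).trans
      (by gcongr; rw [← dist_eq_norm]; exact (hLδ hdist).le)
  simpa [hrep] using intervalIntegral.norm_integral_le_of_norm_le_const hsmall

end LineIntegral

section PartialDerivatives

variable {ℓ : ℕ}

theorem fderiv_apply_eq_sum_pd (f : (Fin ℓ → ℝ) → ℝ) (y h : Fin ℓ → ℝ) :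
    fderiv ℝ f y h = ∑ i, pd i f y * h i := by
  conv_lhs => rw [pi_eq_sum_univ' h, map_sum]
  simp [pd, mul_comm]

theorem norm_fderiv_le_sum_abs_pd (f : (Fin ℓ → ℝ) → ℝ) (y : Fin ℓ → ℝ) :
    ‖fderiv ℝ f y‖ ≤ ∑ i, |pd i f y| := by
  refine ContinuousLinearMap.opNorm_le_bound _ (by positivity) fun h => ?_
  rw [fderiv_apply_eq_sum_pd, Finset.sum_mul]
  refine (norm_sum_le _ _).trans (Finset.sum_le_sum fun i _ => ?_)
  rw [norm_mul, Real.norm_eq_abs]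
  gcongr
  exact norm_le_pi_norm h i

theorem pd_eq_of_hasFDerivAt {f : (Fin ℓ → ℝ) → ℝ} {ζ : Fin ℓ → ℝ} {x : Fin ℓ → ℝ}
    (hf : HasFDerivAt f (∑ i, ζ i • (ContinuousLinearMap.proj i : (Fin ℓ → ℝ) →L[ℝ] ℝ)) x)
    (i : Fin ℓ) : pd i f x = ζ i := by
  simp [pd, hf.fderiv, Pi.single_apply]

end PartialDerivatives

theorem stmt11_general {ℓ : ℕ} (v : (Fin ℓ → ℝ) → ℝ)
    (hv_cont : Continuous v)
    (g : ℕ → (Fin ℓ → ℝ) → ℝ) (hg_smooth : ∀ n, ContDiff ℝ 1 (g n))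
    (hg_bdd : ∃ M : ℝ, ∀ n, (∀ x, |g n x| ≤ M * v x) ∧
      ∀ (i : Fin ℓ) x, |pd i (g n) x| ≤ M * v x)
    (glim : (Fin ℓ → ℝ) → ℝ) (ζ : (Fin ℓ → ℝ) → Fin ℓ → ℝ)
    (hζ_cont : Continuous ζ)
    (hconv : ∀ x, Tendsto (fun n => g n x) atTop (nhds (glim x)))
    (hconv' : ∀ x (i : Fin ℓ),
      Tendsto (fun n => pd i (g n) x) atTop (nhds (ζ x i))) :
    (∀ x, HasFDerivAt glim
      (∑ i, ζ x i • (ContinuousLinearMap.proj i : (Fin ℓ → ℝ) →L[ℝ] ℝ)) x) ∧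
    MemLw1 v glim := by
  obtain ⟨M, hM⟩ := hg_bdd
  set L : (Fin ℓ → ℝ) → (Fin ℓ → ℝ) →L[ℝ] ℝ :=
    fun x => ∑ i, ζ x i • ContinuousLinearMap.proj i
  have hL : Continuous L := by fun_prop
  have hfderiv_bound : ∀ n y, ‖fderiv ℝ (g n) y‖ ≤ ℓ * (M * v y) := fun n y => by
    simpa using (norm_fderiv_le_sum_abs_pd _ y).trans (Finset.sum_le_sum fun i _ => (hM n).2 i y)
  have hfderiv_lim : ∀ y h, Tendsto (fun n => fderiv ℝ (g n) y h) atTop (𝓝 (L y h)) :=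
    fun y h => by
      simpa [L, fderiv_apply_eq_sum_pd] using
        tendsto_finsetSum _ fun i _ => (hconv' y i).mul_const (h i)
  have hglim : ∀ x, HasFDerivAt glim (L x) x := fun x =>
    hasFDerivAt_of_sub_eq_integral hL
      (sub_eq_integral_of_tendsto_fderiv hg_smooth (by fun_prop) hfderiv_bound hconv hfderiv_lim x)
  refine ⟨hglim, ?_, ⟨M, fun x => ?_⟩, fun i => ⟨M, fun x => ?_⟩⟩
  · exact contDiff_one_iff_fderiv.mpr ⟨fun x => (hglim x).differentiableAt,
      hL.congr fun x => (hglim x).fderiv.symm⟩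
  · exact le_of_tendsto (hconv x).abs (Eventually.of_forall fun n => (hM n).1 x)
  · rw [pd_eq_of_hasFDerivAt (hglim x)]
    exact le_of_tendsto (hconv' x i).abs (Eventually.of_forall fun n => (hM n).2 i x)

/-- Lemma 3.6 / `t:nablaPQx1`: if `C¹` functions `gₙ` have
uniformly bounded `‖·‖_{v,1}`-norms, `gₙ → g` pointwise, `∇gₙ → ζ` pointwise,
and `g, ζ` are continuous, then `g` is differentiable with `∇g = ζ` and
`g ∈ L_v^1`. -/
theorem stmt11 {ℓ : ℕ} (hℓ : 1 ≤ ℓ) (v : (Fin ℓ → ℝ) → ℝ)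
    (hv_cont : Continuous v) (hv_one : ∀ x, 1 ≤ v x)
    (g : ℕ → (Fin ℓ → ℝ) → ℝ) (hg_smooth : ∀ n, ContDiff ℝ 1 (g n))
    (hg_bdd : ∃ M : ℝ, ∀ n, (∀ x, |g n x| ≤ M * v x) ∧
      ∀ (i : Fin ℓ) x, |pd i (g n) x| ≤ M * v x)
    (glim : (Fin ℓ → ℝ) → ℝ) (ζ : (Fin ℓ → ℝ) → Fin ℓ → ℝ)
    (hglim_cont : Continuous glim) (hζ_cont : Continuous ζ)
    (hconv : ∀ x, Tendsto (fun n => g n x) atTop (nhds (glim x)))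
    (hconv' : ∀ x (i : Fin ℓ),
      Tendsto (fun n => pd i (g n) x) atTop (nhds (ζ x i))) :
    (∀ x, HasFDerivAt glim
      (∑ i, ζ x i • (ContinuousLinearMap.proj i : (Fin ℓ → ℝ) →L[ℝ] ℝ)) x) ∧
    MemLw1 v glim :=
  stmt11_general v hv_cont g hg_smooth hg_bdd glim ζ hζ_cont hconv hconv'

end
end

section
/- Let E be a normed vector space and let Z and (M_n)_{n≥1} be bounded linear operators on E such that sup_n ‖M_n‖ < ∞, sup_n ‖I − M_n‖ < ∞, and M_m M_n = M_n M_m = M_n for all m > n. If ‖Z − M_n Z M_n‖ → 0 as n → ∞, then also ‖Z − Z M_n‖ → 0 and ‖Z − M_n Z‖ → 0 as n → ∞. -/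
/-!
Compare the one-sided truncation at `n + 1` with the two-sided one at `n`: since
`Mₙ Mₙ₊₁ = Mₙ`, the error `Z - Z Mₙ₊₁` factors as `(Z - Mₙ Z Mₙ)(1 - Mₙ₊₁)`, and symmetrically
`Z - Mₙ₊₁ Z = (1 - Mₙ₊₁)(Z - Mₙ Z Mₙ)`. The uniform bound on `‖1 - Mₙ‖` then transfers the
convergence.
-/

open Filter Topology

section Ring

variable {R : Type*} [Ring R] {Z P Q : R}

theorem sub_mul_eq_sub_sandwich_mul_one_sub (h : Q * P = Q) :
    Z - Z * P = (Z - Q * Z * Q) * (1 - P) := by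
  simp only [sub_mul, mul_sub, mul_one, mul_assoc, h]
  abel

theorem sub_mul_eq_one_sub_mul_sub_sandwich (h : P * Q = Q) :
    Z - P * Z = (1 - P) * (Z - Q * Z * Q) := by
  simp only [sub_mul, mul_sub, one_mul, ← mul_assoc, h]
  abel

end Ring

section SeminormedRing

variable {R : Type*} [SeminormedRing R] {Z : R} {M : ℕ → R}

theorem tendsto_sub_mul_right_of_tendsto_sub_sandwich (hM : ∀ n, M n * M (n + 1) = M n)
    (hbdd : ∃ K, ∀ n, ‖1 - M n‖ ≤ K)
    (hZ : Tendsto (fun n => Z - M n * Z * M n) atTop (𝓝 0)) :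
    Tendsto (fun n => Z - Z * M n) atTop (𝓝 0) := by
  obtain ⟨K, hK⟩ := hbdd
  rw [← tendsto_add_atTop_iff_nat 1]
  simp only [sub_mul_eq_sub_sandwich_mul_one_sub (hM _)]
  exact hZ.zero_mul_isBoundedUnder_le (isBoundedUnder_of ⟨K, fun n => hK (n + 1)⟩)

theorem tendsto_sub_mul_left_of_tendsto_sub_sandwich (hM : ∀ n, M (n + 1) * M n = M n)
    (hbdd : ∃ K, ∀ n, ‖1 - M n‖ ≤ K)
    (hZ : Tendsto (fun n => Z - M n * Z * M n) atTop (𝓝 0)) :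
    Tendsto (fun n => Z - M n * Z) atTop (𝓝 0) := by
  obtain ⟨K, hK⟩ := hbdd
  rw [← tendsto_add_atTop_iff_nat 1]
  simp only [sub_mul_eq_one_sub_mul_sub_sandwich (hM _)]
  exact isBoundedUnder_le_mul_tendsto_zero (isBoundedUnder_of ⟨K, fun n => hK (n + 1)⟩) hZ

end SeminormedRing

theorem stmt12_general {E : Type*} [NormedAddCommGroup E] [NormedSpace ℝ E]
    (Z : E →L[ℝ] E) (M : ℕ → E →L[ℝ] E)
    (hIM_bdd : ∃ K : ℝ, ∀ n, ‖(1 : E →L[ℝ] E) - M n‖ ≤ K)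
    (hM_proj : ∀ m n : ℕ, n < m → M m * M n = M n ∧ M n * M m = M n)
    (hZ : Tendsto (fun n => ‖Z - M n * Z * M n‖) atTop (nhds 0)) :
    Tendsto (fun n => ‖Z - Z * M n‖) atTop (nhds 0) ∧
    Tendsto (fun n => ‖Z - M n * Z‖) atTop (nhds 0) := by
  have hZ' := tendsto_zero_iff_norm_tendsto_zero.2 hZ
  refine ⟨tendsto_zero_iff_norm_tendsto_zero.1 ?_, tendsto_zero_iff_norm_tendsto_zero.1 ?_⟩
  · exact tendsto_sub_mul_right_of_tendsto_sub_sandwich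
      (fun n => (hM_proj (n + 1) n n.lt_succ_self).2) hIM_bdd hZ'
  · exact tendsto_sub_mul_left_of_tendsto_sub_sandwich
      (fun n => (hM_proj (n + 1) n n.lt_succ_self).1) hIM_bdd hZ'

/-- Lemma A.3 / `t:TruncLR`: if a bounded operator `Z` on a
normed space can be approximated in operator norm by its two-sided truncations
`Mₙ Z Mₙ`, where the truncation operators `Mₙ` are uniformly bounded,
`I − Mₙ` are uniformly bounded, and `M_m Mₙ = Mₙ M_m = Mₙ` for `m > n`, then
`Z` can be approximated by its one-sided truncations `Z Mₙ` and `Mₙ Z`. -/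
theorem stmt12 {E : Type*} [NormedAddCommGroup E] [NormedSpace ℝ E]
    (Z : E →L[ℝ] E) (M : ℕ → E →L[ℝ] E)
    (hM_bdd : ∃ K : ℝ, ∀ n, ‖M n‖ ≤ K)
    (hIM_bdd : ∃ K : ℝ, ∀ n, ‖(1 : E →L[ℝ] E) - M n‖ ≤ K)
    (hM_proj : ∀ m n : ℕ, n < m → M m * M n = M n ∧ M n * M m = M n)
    (hZ : Tendsto (fun n => ‖Z - M n * Z * M n‖) atTop (nhds 0)) :
    Tendsto (fun n => ‖Z - Z * M n‖) atTop (nhds 0) ∧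
    Tendsto (fun n => ‖Z - M n * Z‖) atTop (nhds 0) :=
  stmt12_general Z M hIM_bdd hM_proj hZ
end
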